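/- arXiv:1806.09311 — 6 statements merged into one kernel-verified Lean document; each statement's English description precedes it below -/
import Mathlib

section
/- One-dimensional case of Theorem 3.1 (L²-stability of the truncated PML problem): There exists an absolute constant C > 0 such that for all k > 0, σ₀ > 0, 0 < R < R̂ with R̂ ≤ 2 and k·σ₀·L ≥ 1 (where L = R̂ − R), and all square-integrable f : [−R̂, R̂] → ℂ, the truncated PML solution û satisfies (∫_{−R̂}^{R̂} |û(x)|² dx)^{1/2} ≤ (C/k) (∫_{−R̂}^{R̂} |f(x)|² dx)^{1/2}. -/
open MeasureTheory intervalIntegral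

noncomputable section

/-- The complex coordinate stretching `t̃`: `t̃ = t` for `|t| ≤ R` and
`t̃ = t + i σ₀ sgn(t)(|t| − R)` for `|t| > R`. -/
def stretch (σ₀ R t : ℝ) : ℂ :=
  if |t| ≤ R then (t : ℂ) else (t : ℂ) + Complex.I * σ₀ * (Real.sign t * (|t| - R))

/-- `R̂̃ = R̂ + i σ₀ L` where `L = R̂ − R`. -/
def Rtil (σ₀ R Rh : ℝ) : ℂ := (Rh : ℂ) + Complex.I * σ₀ * ((Rh : ℂ) - R)

/-- `J₁ = ∫_{−R̂}^{R̂} e^{−ik t̃(t)} f(t) dt`. -/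
def J1 (k σ₀ R Rh : ℝ) (f : ℝ → ℂ) : ℂ :=
  ∫ t in (-Rh)..Rh, Complex.exp (-(Complex.I * k * stretch σ₀ R t)) * f t

/-- `J₂ = ∫_{−R̂}^{R̂} e^{ik t̃(t)} f(t) dt`. -/
def J2 (k σ₀ R Rh : ℝ) (f : ℝ → ℂ) : ℂ :=
  ∫ t in (-Rh)..Rh, Complex.exp (Complex.I * k * stretch σ₀ R t) * f t

/-- `D₁ = (1/(2ik))(e^{2ik R̂̃} J₂ − J₁)/(e^{2ik R̂̃} − e^{−2ik R̂̃})`. -/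
def D1 (k σ₀ R Rh : ℝ) (f : ℝ → ℂ) : ℂ :=
  (1 / (2 * Complex.I * k)) *
    (Complex.exp (2 * Complex.I * k * Rtil σ₀ R Rh) * J2 k σ₀ R Rh f - J1 k σ₀ R Rh f) /
      (Complex.exp (2 * Complex.I * k * Rtil σ₀ R Rh) -
        Complex.exp (-(2 * Complex.I * k * Rtil σ₀ R Rh)))

/-- `D₂ = (1/(2ik))(e^{2ik R̂̃} J₁ − J₂)/(e^{2ik R̂̃} − e^{−2ik R̂̃})`. -/
def D2 (k σ₀ R Rh : ℝ) (f : ℝ → ℂ) : ℂ :=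
  (1 / (2 * Complex.I * k)) *
    (Complex.exp (2 * Complex.I * k * Rtil σ₀ R Rh) * J1 k σ₀ R Rh f - J2 k σ₀ R Rh f) /
      (Complex.exp (2 * Complex.I * k * Rtil σ₀ R Rh) -
        Complex.exp (-(2 * Complex.I * k * Rtil σ₀ R Rh)))

/-- The truncated PML solution `û` in one dimension. -/
def uhat (k σ₀ R Rh : ℝ) (f : ℝ → ℂ) (x : ℝ) : ℂ :=
  -(1 / (2 * Complex.I * k)) * Complex.exp (-(Complex.I * k * stretch σ₀ R x)) *
      (∫ t in x..Rh, Complex.exp (Complex.I * k * stretch σ₀ R t) * f t)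
    - (1 / (2 * Complex.I * k)) * Complex.exp (Complex.I * k * stretch σ₀ R x) *
      (∫ t in (-Rh)..x, Complex.exp (-(Complex.I * k * stretch σ₀ R t)) * f t)
    + D1 k σ₀ R Rh f * Complex.exp (-(Complex.I * k * stretch σ₀ R x))
    + D2 k σ₀ R Rh f * Complex.exp (Complex.I * k * stretch σ₀ R x)

open Set

/-! Since `Im t̃` is nondecreasing, in each Volterra integral of `û` the outer factor
`e^{∓ik x̃}` exactly compensates the largest inner weight `e^{±ik t̃}`, so both are bounded by
`‖f‖_{L¹}/(2k)`. With `M = kσ₀L`, all weights are at most `e^M` on `[−R̂, R̂]`, so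
`|J₁|, |J₂| ≤ e^M ‖f‖_{L¹}`, while `|e^{2ikR̂̃} − e^{−2ikR̂̃}| ≥ e^{2M}/2` once `M ≥ 1`; hence
`|D_i e^{±ik x̃}| ≤ 2‖f‖_{L¹}/k`. So `|û| ≤ 5‖f‖_{L¹}/k` pointwise, and Cauchy–Schwarz on an
interval of length `2R̂ ≤ 4` gives the constant `20`. -/

lemma stretch_im (σ₀ : ℝ) {R : ℝ} (hR : 0 ≤ R) (t : ℝ) :
    (stretch σ₀ R t).im = σ₀ * (max (t - R) 0 + min (t + R) 0) := by
  unfold stretch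
  split_ifs with h
  · rw [abs_le] at h
    simp [max_eq_right (by linarith : t - R ≤ 0), min_eq_right (by linarith : 0 ≤ t + R)]
  · rcases lt_trichotomy t 0 with ht | rfl | ht
    · rw [abs_of_neg ht] at h ⊢
      simp only [Real.sign_of_neg ht, max_eq_right (by linarith : t - R ≤ 0),
        min_eq_left (by linarith : t + R ≤ 0)]
      simp [Complex.mul_im, add_comm]
    · simp at h; linarith
    · rw [abs_of_pos ht] at h ⊢
      simp [Real.sign_of_pos ht, max_eq_left (by linarith : 0 ≤ t - R),
        min_eq_right (by linarith : 0 ≤ t + R)]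

lemma monotone_stretch_im {σ₀ R : ℝ} (hσ : 0 ≤ σ₀) (hR : 0 ≤ R) :
    Monotone fun t => (stretch σ₀ R t).im := by
  intro a b hab
  simp only [stretch_im σ₀ hR]
  gcongr

lemma abs_stretch_im_le {σ₀ R Rh t : ℝ} (hσ : 0 ≤ σ₀) (hR : 0 ≤ R) (hRRh : R ≤ Rh)
    (ht : t ∈ Icc (-Rh) Rh) : |(stretch σ₀ R t).im| ≤ σ₀ * (Rh - R) := by
  have hleft : (stretch σ₀ R (-Rh)).im = -(σ₀ * (Rh - R)) := by
    rw [stretch_im σ₀ hR, max_eq_right (by linarith), min_eq_left (by linarith)]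
    ring
  have hright : (stretch σ₀ R Rh).im = σ₀ * (Rh - R) := by
    rw [stretch_im σ₀ hR, max_eq_left (by linarith), min_eq_right (by linarith)]
    ring
  rw [abs_le, ← hleft, ← hright]
  exact ⟨monotone_stretch_im hσ hR ht.1, monotone_stretch_im hσ hR ht.2⟩

lemma norm_exp_I_mul (k : ℝ) (z : ℂ) :
    ‖Complex.exp (Complex.I * k * z)‖ = Real.exp (-(k * z.im)) := by
  simp [Complex.norm_exp, Complex.mul_re]

lemma norm_exp_neg_I_mul (k : ℝ) (z : ℂ) :
    ‖Complex.exp (-(Complex.I * k * z))‖ = Real.exp (k * z.im) := by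
  simp [Complex.norm_exp, Complex.mul_re]

lemma norm_one_div_two_I_mul {k : ℝ} (hk : 0 < k) : ‖1 / (2 * Complex.I * k)‖ = 1 / (2 * k) := by
  simp [abs_of_pos hk]

lemma re_two_I_mul_Rtil (k σ₀ R Rh : ℝ) :
    (2 * Complex.I * k * Rtil σ₀ R Rh).re = -(2 * (k * σ₀ * (Rh - R))) := by
  simp [Rtil, Complex.mul_re, Complex.mul_im]
  ring

lemma norm_integral_mul_le {a b c d C : ℝ} {w f : ℝ → ℂ} (hca : c ≤ a) (hab : a ≤ b)
    (hbd : b ≤ d) (hf : IntervalIntegrable f volume c d) (hw : ∀ t ∈ Icc a b, ‖w t‖ ≤ C) :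
    ‖∫ t in a..b, w t * f t‖ ≤ C * ∫ t in c..d, ‖f t‖ := by
  have hC : 0 ≤ C := (norm_nonneg _).trans (hw a ⟨le_rfl, hab⟩)
  have hfab : IntervalIntegrable f volume a b :=
    hf.mono_set (by rw [uIcc_of_le hab, uIcc_of_le (by linarith)]; exact Icc_subset_Icc hca hbd)
  calc ‖∫ t in a..b, w t * f t‖ ≤ ∫ t in a..b, C * ‖f t‖ := by
        refine norm_integral_le_of_norm_le hab (ae_of_all _ fun t ht => ?_) (hfab.norm.const_mul C)
        rw [norm_mul]
        exact mul_le_mul_of_nonneg_right (hw t (Ioc_subset_Icc_self ht)) (norm_nonneg _)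
    _ = C * ∫ t in a..b, ‖f t‖ := integral_const_mul _ _
    _ ≤ C * ∫ t in c..d, ‖f t‖ := by
        gcongr
        exact integral_mono_interval hca hab hbd (ae_of_all _ fun t => norm_nonneg _) hf.norm

lemma norm_div_exp_sub_exp_le {z A B : ℂ} {M F : ℝ} (hz : z.re = -(2 * M)) (hM : 1 ≤ M)
    (hA : ‖A‖ ≤ Real.exp M * F) (hB : ‖B‖ ≤ Real.exp M * F) :
    ‖(Complex.exp z * A - B) / (Complex.exp z - Complex.exp (-z))‖ ≤ 4 * Real.exp (-M) * F := by
  have hF : 0 ≤ F := nonneg_of_mul_nonneg_right ((norm_nonneg _).trans hA) (Real.exp_pos M)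
  have hsmall : ‖Complex.exp z‖ ≤ 1 := by
    rw [Complex.norm_exp, hz, Real.exp_le_one_iff]; linarith
  have hlarge : ‖Complex.exp (-z)‖ = Real.exp M * Real.exp M := by
    rw [Complex.norm_exp, Complex.neg_re, hz, neg_neg, ← Real.exp_add, two_mul]
  have hexp : 2 ≤ Real.exp M * Real.exp M := by
    nlinarith [Real.add_one_le_exp M]
  have hnum : ‖Complex.exp z * A - B‖ ≤ 2 * (Real.exp M * F) := by
    calc ‖Complex.exp z * A - B‖ ≤ ‖Complex.exp z‖ * ‖A‖ + ‖B‖ := by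
          rw [← norm_mul]; exact norm_sub_le _ _
      _ ≤ 1 * (Real.exp M * F) + Real.exp M * F := by gcongr
      _ = 2 * (Real.exp M * F) := by ring
  have hden : Real.exp M * Real.exp M / 2 ≤ ‖Complex.exp z - Complex.exp (-z)‖ := by
    have := norm_sub_norm_le (Complex.exp (-z)) (Complex.exp z)
    rw [norm_sub_rev] at this
    linarith
  rw [norm_div, div_le_iff₀ ((by positivity : (0 : ℝ) < _).trans_le hden)]
  calc ‖Complex.exp z * A - B‖ ≤ 2 * (Real.exp M * F) := hnum
    _ = 4 * Real.exp (-M) * F * (Real.exp M * Real.exp M / 2) := by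
        rw [Real.exp_neg]; field_simp; ring
    _ ≤ 4 * Real.exp (-M) * F * ‖Complex.exp z - Complex.exp (-z)‖ := by gcongr

lemma integral_norm_le_sqrt_mul_sqrt {a b : ℝ} {f : ℝ → ℂ} (hab : a ≤ b)
    (hf : MemLp f 2 (volume.restrict (Icc a b))) :
    ∫ t in a..b, ‖f t‖ ≤ √(b - a) * √(∫ t in a..b, ‖f t‖ ^ 2) := by
  have h := integral_mul_le_Lp_mul_Lq_of_nonneg (μ := volume.restrict (Icc a b))
    Real.HolderConjugate.two_two (f := fun t => ‖f t‖) (g := fun _ => (1 : ℝ))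
    (ae_of_all _ fun _ => norm_nonneg _) (ae_of_all _ fun _ => zero_le_one)
    (by simpa using hf.norm) (by simpa using memLp_const (1 : ℝ))
  rw [integral_of_le hab, integral_of_le hab, ← integral_Icc_eq_integral_Ioc,
    ← integral_Icc_eq_integral_Ioc, Real.sqrt_eq_rpow, Real.sqrt_eq_rpow]
  simpa [mul_comm, hab] using h

lemma sqrt_integral_norm_sq_le {a b C : ℝ} {u : ℝ → ℂ} (hab : a ≤ b)
    (hu : ∀ x ∈ Icc a b, ‖u x‖ ≤ C) :
    √(∫ x in a..b, ‖u x‖ ^ 2) ≤ √(b - a) * C := by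
  have hC : 0 ≤ C := (norm_nonneg _).trans (hu a ⟨le_rfl, hab⟩)
  have hint : ∫ x in a..b, ‖u x‖ ^ 2 ≤ C ^ 2 * (b - a) := by
    have h := norm_integral_le_of_norm_le_const (a := a) (b := b) (C := C ^ 2)
      (f := fun x => ‖u x‖ ^ 2) fun x hx => by
        rw [uIoc_of_le hab] at hx
        simpa using pow_le_pow_left₀ (norm_nonneg _) (hu x (Ioc_subset_Icc_self hx)) 2
    rw [abs_of_nonneg (sub_nonneg.2 hab)] at h
    exact (le_abs_self _).trans (by simpa using h)
  calc √(∫ x in a..b, ‖u x‖ ^ 2) ≤ √(C ^ 2 * (b - a)) := Real.sqrt_le_sqrt hint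
    _ = √(b - a) * C := by rw [Real.sqrt_mul (sq_nonneg C), Real.sqrt_sq hC, mul_comm]

section PML

variable {k σ₀ R Rh : ℝ} {f : ℝ → ℂ}

lemma norm_exp_I_mul_stretch_le (hk : 0 ≤ k) (hσ : 0 ≤ σ₀) (hR : 0 ≤ R) (hRRh : R ≤ Rh)
    {t : ℝ} (ht : t ∈ Icc (-Rh) Rh) :
    ‖Complex.exp (Complex.I * k * stretch σ₀ R t)‖ ≤ Real.exp (k * σ₀ * (Rh - R)) := by
  have h := mul_le_mul_of_nonneg_left (abs_stretch_im_le hσ hR hRRh ht) hk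
  rw [norm_exp_I_mul, Real.exp_le_exp]
  linarith [mul_le_mul_of_nonneg_left (neg_abs_le (stretch σ₀ R t).im) hk]

lemma norm_exp_neg_I_mul_stretch_le (hk : 0 ≤ k) (hσ : 0 ≤ σ₀) (hR : 0 ≤ R) (hRRh : R ≤ Rh)
    {t : ℝ} (ht : t ∈ Icc (-Rh) Rh) :
    ‖Complex.exp (-(Complex.I * k * stretch σ₀ R t))‖ ≤ Real.exp (k * σ₀ * (Rh - R)) := by
  have h := mul_le_mul_of_nonneg_left (abs_stretch_im_le hσ hR hRRh ht) hk
  rw [norm_exp_neg_I_mul, Real.exp_le_exp]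
  linarith [mul_le_mul_of_nonneg_left (le_abs_self (stretch σ₀ R t).im) hk]

lemma norm_J1_le (hk : 0 ≤ k) (hσ : 0 ≤ σ₀) (hR : 0 ≤ R) (hRRh : R ≤ Rh)
    (hf : IntervalIntegrable f volume (-Rh) Rh) :
    ‖J1 k σ₀ R Rh f‖ ≤ Real.exp (k * σ₀ * (Rh - R)) * ∫ t in (-Rh)..Rh, ‖f t‖ :=
  norm_integral_mul_le le_rfl (by linarith) le_rfl hf fun _ ht =>
    norm_exp_neg_I_mul_stretch_le hk hσ hR hRRh ht

lemma norm_J2_le (hk : 0 ≤ k) (hσ : 0 ≤ σ₀) (hR : 0 ≤ R) (hRRh : R ≤ Rh)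
    (hf : IntervalIntegrable f volume (-Rh) Rh) :
    ‖J2 k σ₀ R Rh f‖ ≤ Real.exp (k * σ₀ * (Rh - R)) * ∫ t in (-Rh)..Rh, ‖f t‖ :=
  norm_integral_mul_le le_rfl (by linarith) le_rfl hf fun _ ht =>
    norm_exp_I_mul_stretch_le hk hσ hR hRRh ht

lemma norm_D1_le (hk : 0 < k) (hσ : 0 ≤ σ₀) (hR : 0 ≤ R) (hRRh : R ≤ Rh)
    (hM : 1 ≤ k * σ₀ * (Rh - R)) (hf : IntervalIntegrable f volume (-Rh) Rh) :
    ‖D1 k σ₀ R Rh f‖ ≤ 2 / k * Real.exp (-(k * σ₀ * (Rh - R))) * ∫ t in (-Rh)..Rh, ‖f t‖ := by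
  rw [D1, mul_div_assoc, norm_mul, norm_one_div_two_I_mul hk]
  calc _ ≤ 1 / (2 * k) * (4 * Real.exp (-(k * σ₀ * (Rh - R))) * ∫ t in (-Rh)..Rh, ‖f t‖) := by
        gcongr
        exact norm_div_exp_sub_exp_le (re_two_I_mul_Rtil k σ₀ R Rh) hM
          (norm_J2_le hk.le hσ hR hRRh hf) (norm_J1_le hk.le hσ hR hRRh hf)
    _ = _ := by field_simp; ring

lemma norm_D2_le (hk : 0 < k) (hσ : 0 ≤ σ₀) (hR : 0 ≤ R) (hRRh : R ≤ Rh)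
    (hM : 1 ≤ k * σ₀ * (Rh - R)) (hf : IntervalIntegrable f volume (-Rh) Rh) :
    ‖D2 k σ₀ R Rh f‖ ≤ 2 / k * Real.exp (-(k * σ₀ * (Rh - R))) * ∫ t in (-Rh)..Rh, ‖f t‖ := by
  rw [D2, mul_div_assoc, norm_mul, norm_one_div_two_I_mul hk]
  calc _ ≤ 1 / (2 * k) * (4 * Real.exp (-(k * σ₀ * (Rh - R))) * ∫ t in (-Rh)..Rh, ‖f t‖) := by
        gcongr
        exact norm_div_exp_sub_exp_le (re_two_I_mul_Rtil k σ₀ R Rh) hM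
          (norm_J1_le hk.le hσ hR hRRh hf) (norm_J2_le hk.le hσ hR hRRh hf)
    _ = _ := by field_simp; ring

lemma norm_exp_mul_integral_right_le {a b x : ℝ} (hk : 0 ≤ k) (hσ : 0 ≤ σ₀) (hR : 0 ≤ R)
    (hf : IntervalIntegrable f volume a b) (hx : x ∈ Icc a b) :
    ‖Complex.exp (-(Complex.I * k * stretch σ₀ R x)) *
        ∫ t in x..b, Complex.exp (Complex.I * k * stretch σ₀ R t) * f t‖ ≤
      ∫ t in a..b, ‖f t‖ := by
  rw [norm_mul, norm_exp_neg_I_mul]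
  calc _ ≤ Real.exp (k * (stretch σ₀ R x).im) *
        (Real.exp (-(k * (stretch σ₀ R x).im)) * ∫ t in a..b, ‖f t‖) := by
        gcongr
        refine norm_integral_mul_le hx.1 hx.2 le_rfl hf fun t ht => ?_
        rw [norm_exp_I_mul, Real.exp_le_exp]
        exact neg_le_neg (mul_le_mul_of_nonneg_left (monotone_stretch_im hσ hR ht.1) hk)
    _ = ∫ t in a..b, ‖f t‖ := by
        rw [← mul_assoc, ← Real.exp_add, add_neg_cancel, Real.exp_zero, one_mul]

lemma norm_exp_mul_integral_left_le {a b x : ℝ} (hk : 0 ≤ k) (hσ : 0 ≤ σ₀) (hR : 0 ≤ R)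
    (hf : IntervalIntegrable f volume a b) (hx : x ∈ Icc a b) :
    ‖Complex.exp (Complex.I * k * stretch σ₀ R x) *
        ∫ t in a..x, Complex.exp (-(Complex.I * k * stretch σ₀ R t)) * f t‖ ≤
      ∫ t in a..b, ‖f t‖ := by
  rw [norm_mul, norm_exp_I_mul]
  calc _ ≤ Real.exp (-(k * (stretch σ₀ R x).im)) *
        (Real.exp (k * (stretch σ₀ R x).im) * ∫ t in a..b, ‖f t‖) := by
        gcongr
        refine norm_integral_mul_le le_rfl hx.1 hx.2 hf fun t ht => ?_
        rw [norm_exp_neg_I_mul, Real.exp_le_exp]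
        exact mul_le_mul_of_nonneg_left (monotone_stretch_im hσ hR ht.2) hk
    _ = ∫ t in a..b, ‖f t‖ := by
        rw [← mul_assoc, ← Real.exp_add, neg_add_cancel, Real.exp_zero, one_mul]

lemma norm_uhat_le (hk : 0 < k) (hσ : 0 ≤ σ₀) (hR : 0 ≤ R) (hRRh : R ≤ Rh)
    (hM : 1 ≤ k * σ₀ * (Rh - R)) (hf : IntervalIntegrable f volume (-Rh) Rh) {x : ℝ}
    (hx : x ∈ Icc (-Rh) Rh) :
    ‖uhat k σ₀ R Rh f x‖ ≤ 5 / k * ∫ t in (-Rh)..Rh, ‖f t‖ := by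
  set F := ∫ t in (-Rh)..Rh, ‖f t‖
  have hF : 0 ≤ F := integral_nonneg (by linarith) fun _ _ => norm_nonneg _
  have hvolterra_right : ‖-(1 / (2 * Complex.I * k)) *
      Complex.exp (-(Complex.I * k * stretch σ₀ R x)) *
        ∫ t in x..Rh, Complex.exp (Complex.I * k * stretch σ₀ R t) * f t‖ ≤ 1 / (2 * k) * F := by
    rw [mul_assoc, norm_mul, norm_neg, norm_one_div_two_I_mul hk]
    gcongr
    exact norm_exp_mul_integral_right_le hk.le hσ hR hf hx
  have hvolterra_left : ‖1 / (2 * Complex.I * k) * Complex.exp (Complex.I * k * stretch σ₀ R x) *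
        ∫ t in (-Rh)..x, Complex.exp (-(Complex.I * k * stretch σ₀ R t)) * f t‖ ≤
      1 / (2 * k) * F := by
    rw [mul_assoc, norm_mul, norm_one_div_two_I_mul hk]
    gcongr
    exact norm_exp_mul_integral_left_le hk.le hσ hR hf hx
  have hcancel : 2 / k * Real.exp (-(k * σ₀ * (Rh - R))) * F * Real.exp (k * σ₀ * (Rh - R)) =
      2 / k * F := by
    rw [Real.exp_neg]; field_simp
  have hD1 : ‖D1 k σ₀ R Rh f * Complex.exp (-(Complex.I * k * stretch σ₀ R x))‖ ≤ 2 / k * F := by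
    rw [norm_mul, ← hcancel]
    gcongr
    exacts [norm_D1_le hk hσ hR hRRh hM hf, norm_exp_neg_I_mul_stretch_le hk.le hσ hR hRRh hx]
  have hD2 : ‖D2 k σ₀ R Rh f * Complex.exp (Complex.I * k * stretch σ₀ R x)‖ ≤ 2 / k * F := by
    rw [norm_mul, ← hcancel]
    gcongr
    exacts [norm_D2_le hk hσ hR hRRh hM hf, norm_exp_I_mul_stretch_le hk.le hσ hR hRRh hx]
  refine (norm_add_le _ _).trans ((add_le_add ((norm_add_le _ _).trans (add_le_add
    ((norm_sub_le _ _).trans (add_le_add hvolterra_right hvolterra_left)) hD1)) hD2).trans_eq ?_)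
  ring

end PML

/-- One-dimensional case of Theorem 3.1 (L²-stability of the truncated PML problem):
there is an absolute constant `C > 0` such that for all `k > 0`, `σ₀ > 0`, `0 < R < R̂ ≤ 2`
with `k σ₀ L ≥ 1` (`L = R̂ − R`) and all square-integrable `f` on `[−R̂, R̂]`,
`‖û‖_{L²(−R̂,R̂)} ≤ (C/k) ‖f‖_{L²(−R̂,R̂)}`. -/
theorem pml_L2_stability_1d :
    ∃ C : ℝ, 0 < C ∧
      ∀ (k σ₀ R Rh : ℝ) (f : ℝ → ℂ),
        0 < k → 0 < σ₀ → 0 < R → R < Rh → Rh ≤ 2 → 1 ≤ k * σ₀ * (Rh - R) →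
        MemLp f 2 (volume.restrict (Set.Icc (-Rh) Rh)) →
        Real.sqrt (∫ x in (-Rh)..Rh, ‖uhat k σ₀ R Rh f x‖ ^ 2) ≤
          (C / k) * Real.sqrt (∫ x in (-Rh)..Rh, ‖f x‖ ^ 2) := by
  refine ⟨20, by norm_num, fun k σ₀ R Rh f hk hσ hR hRRh hRh2 hM hf => ?_⟩
  have hab : -Rh ≤ Rh := by linarith
  have hfi : IntervalIntegrable f volume (-Rh) Rh :=
    (intervalIntegrable_iff_integrableOn_Icc_of_le hab).2 (hf.integrable one_le_two)
  have hlen : √(Rh - -Rh) * √(Rh - -Rh) = 2 * Rh := by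
    rw [Real.mul_self_sqrt (by linarith)]; ring
  calc √(∫ x in (-Rh)..Rh, ‖uhat k σ₀ R Rh f x‖ ^ 2)
      ≤ √(Rh - -Rh) * (5 / k * ∫ t in (-Rh)..Rh, ‖f t‖) :=
        sqrt_integral_norm_sq_le hab fun x hx =>
          norm_uhat_le hk hσ.le hR.le hRRh.le hM hfi hx
    _ ≤ √(Rh - -Rh) * (5 / k * (√(Rh - -Rh) * √(∫ x in (-Rh)..Rh, ‖f x‖ ^ 2))) := by
        gcongr
        exact integral_norm_le_sqrt_mul_sqrt hab hf
    _ = 5 * (2 * Rh) / k * √(∫ x in (-Rh)..Rh, ‖f x‖ ^ 2) := by rw [← hlen]; ring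
    _ ≤ 20 / k * √(∫ x in (-Rh)..Rh, ‖f x‖ ^ 2) := by gcongr; linarith

end
end

section
/- One-dimensional case of Corollary 3.2 (energy-norm stability of the truncated PML problem): There exists a constant C > 0 depending only on σ₀ such that for all k > 0, 0 < R < R̂ with R̂ ≤ 2 and k·σ₀·L ≥ 1 (where L = R̂ − R), and all continuous f : [−R̂, R̂] → ℂ, the truncated PML solution û is differentiable at every x ∈ (−R̂, R̂) with |x| ≠ R and satisfies (∫_{(−R̂,R̂)∖{−R,R}} |û′(x)|² dx + k² ∫_{−R̂}^{R̂} |û(x)|² dx)^{1/2} ≤ C (∫_{−R̂}^{R̂} |f(x)|² dx)^{1/2}. -/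
open MeasureTheory intervalIntegral

noncomputable section

/-!
Write `t̃ = t + iσ₀ d(t)` with `d` nondecreasing, so that `|e^{±ikt̃}| = e^{∓kσ₀ d(t)}`. The
Green's-function kernels `e^{-ikx̃} e^{ikt̃}` (for `t ≥ x`) and `e^{ikx̃} e^{-ikt̃}` (for `t ≤ x`)
then have modulus at most `1`, while `|J₁|, |J₂| ≤ e^{kσ₀L} ‖f‖₁`. Because `kσ₀L ≥ 1`, the
denominator of `D₁, D₂` has modulus at least `(4/5) e^{2kσ₀L}`, which absorbs both `e^{kσ₀L}`
factors; hence `|û| ≤ 7 ‖f‖₁ / (2k)` pointwise. By variation of parameters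
`û' = ikα (e^{ikx̃} a₊ − e^{-ikx̃} a₋)` with the same amplitudes `a±` as in `û`, so
`|û'| ≤ 7 (1 + σ₀) ‖f‖₁ / 2`. Integrating over an interval of length `2R̂ ≤ 4` and using
`‖f‖₁² ≤ 2R̂ ‖f‖₂²` gives the estimate with `C = 20 (1 + σ₀)`.
-/

namespace PML1d

open Complex (I exp)
open Set

section General

variable {E : Type*} [NormedAddCommGroup E]

theorem norm_intervalIntegral_mul_le {a b B : ℝ} {w f : ℝ → ℂ} (hab : a ≤ b)
    (hw : ∀ t ∈ Icc a b, ‖w t‖ ≤ B) (hf : IntervalIntegrable f volume a b) :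
    ‖∫ t in a..b, w t * f t‖ ≤ B * ∫ t in a..b, ‖f t‖ := by
  rw [← intervalIntegral.integral_const_mul]
  refine norm_integral_le_of_norm_le hab (ae_of_all _ fun t ht => ?_) (hf.norm.const_mul B)
  rw [norm_mul]
  exact mul_le_mul_of_nonneg_right (hw t (Ioc_subset_Icc_self ht)) (norm_nonneg _)

theorem integral_norm_sq_le_of_norm_le {α : Type*} [MeasurableSpace α] {μ : Measure α}
    {g : α → E} {s : Set α} {B V : ℝ} (hV : 0 ≤ V) (hs : μ s ≤ ENNReal.ofReal V)
    (hg : ∀ x ∈ s, ‖g x‖ ≤ B) :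
    ∫ x in s, ‖g x‖ ^ 2 ∂μ ≤ B ^ 2 * V := by
  have hbound : ∀ x ∈ s, ‖‖g x‖ ^ 2‖ ≤ B ^ 2 := fun x hx => by
    rw [Real.norm_of_nonneg (by positivity)]
    exact pow_le_pow_left₀ (norm_nonneg _) (hg x hx) 2
  calc ∫ x in s, ‖g x‖ ^ 2 ∂μ ≤ B ^ 2 * μ.real s :=
        (le_abs_self _).trans
          (norm_setIntegral_le_of_norm_le_const (hs.trans_lt ENNReal.ofReal_lt_top) hbound)
    _ ≤ B ^ 2 * V :=
        mul_le_mul_of_nonneg_left (ENNReal.toReal_le_of_le_ofReal hV hs) (sq_nonneg B)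

theorem sq_intervalIntegral_le_mul_integral_sq {g : ℝ → ℝ} {a b : ℝ} (hab : a < b)
    (hg : IntervalIntegrable g volume a b)
    (hg2 : IntervalIntegrable (fun t => g t ^ 2) volume a b) :
    (∫ t in a..b, g t) ^ 2 ≤ (b - a) * ∫ t in a..b, g t ^ 2 := by
  set M := ∫ t in a..b, g t
  set c := M / (b - a)
  have hc : c * (b - a) = M := div_mul_cancel₀ M (sub_pos.mpr hab).ne'
  -- the variance of `g` around its mean `c` is nonnegative
  have hvar : 0 ≤ ∫ t in a..b, (g t - c) ^ 2 := integral_nonneg hab.le fun t _ => sq_nonneg _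
  have hexpand : ∫ t in a..b, (g t - c) ^ 2 =
      (∫ t in a..b, g t ^ 2) - 2 * c * M + c ^ 2 * (b - a) := by
    rw [integral_congr (g := fun t => g t ^ 2 - 2 * c * g t + c ^ 2) fun t _ => by ring,
      integral_add (hg2.sub (hg.const_mul _)) intervalIntegrable_const,
      integral_sub hg2 (hg.const_mul _), intervalIntegral.integral_const_mul,
      intervalIntegral.integral_const, smul_eq_mul]
    ring
  nlinarith

variable [NormedSpace ℝ E] [CompleteSpace E]

theorem hasDerivAt_integral_right_of_continuousOn {g : ℝ → E} {a b x : ℝ}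
    (hg : ContinuousOn g (Icc a b)) (hx : x ∈ Ioo a b) :
    HasDerivAt (fun y => ∫ t in a..y, g t) (g x) x :=
  integral_hasDerivAt_right
    ((hg.mono (Icc_subset_Icc_right hx.2.le)).intervalIntegrable_of_Icc hx.1.le)
    ((hg.mono Ioo_subset_Icc_self).stronglyMeasurableAtFilter isOpen_Ioo x hx)
    (hg.continuousAt (Icc_mem_nhds hx.1 hx.2))

theorem hasDerivAt_integral_left_of_continuousOn {g : ℝ → E} {a b x : ℝ}
    (hg : ContinuousOn g (Icc a b)) (hx : x ∈ Ioo a b) :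
    HasDerivAt (fun y => ∫ t in y..b, g t) (-g x) x :=
  integral_hasDerivAt_left
    ((hg.mono (Icc_subset_Icc_left hx.1.le)).intervalIntegrable_of_Icc hx.2.le)
    ((hg.mono Ioo_subset_Icc_self).stronglyMeasurableAtFilter isOpen_Ioo x hx)
    (hg.continuousAt (Icc_mem_nhds hx.1 hx.2))

end General

def damping (R t : ℝ) : ℝ := max (t - R) 0 + min (t + R) 0

variable {k σ₀ R Rh x t : ℝ}

theorem damping_monotone (R : ℝ) : Monotone (damping R) := fun _ _ h =>
  add_le_add (max_le_max (by linarith) le_rfl) (min_le_min (by linarith) le_rfl)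

theorem damping_of_le (hR : 0 ≤ R) (h : R ≤ t) : damping R t = t - R := by
  rw [damping, max_eq_left (by linarith), min_eq_right (by linarith), add_zero]

theorem damping_of_le_neg (hR : 0 ≤ R) (h : t ≤ -R) : damping R t = t + R := by
  rw [damping, max_eq_right (by linarith), min_eq_left (by linarith), zero_add]

theorem abs_damping_le (hR : 0 ≤ R) (hRRh : R ≤ Rh) (ht : t ∈ Icc (-Rh) Rh) :
    |damping R t| ≤ Rh - R := by
  have hup := damping_monotone R ht.2
  have hlow := damping_monotone R ht.1
  rw [damping_of_le hR hRRh] at hup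
  rw [damping_of_le_neg hR (neg_le_neg hRRh)] at hlow
  exact abs_le.mpr ⟨by linarith, hup⟩

theorem stretch_eq (σ₀ : ℝ) (hR : 0 ≤ R) (t : ℝ) :
    stretch σ₀ R t = t + I * σ₀ * damping R t := by
  rw [stretch]
  split_ifs with h
  · rw [damping, max_eq_right (by linarith [le_abs_self t]),
      min_eq_right (by linarith [neg_abs_le t])]
    simp
  · rcases lt_or_gt_of_ne (show t ≠ 0 by rintro rfl; simp at h; linarith) with ht | ht
    · rw [Real.sign_of_neg ht, abs_of_neg ht, damping_of_le_neg hR (by linarith [abs_of_neg ht])]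
      push_cast; ring
    · rw [Real.sign_of_pos ht, abs_of_pos ht, damping_of_le hR (by linarith [abs_of_pos ht])]
      push_cast; ring

theorem continuous_stretch (σ₀ : ℝ) (hR : 0 ≤ R) : Continuous (stretch σ₀ R) := by
  rw [funext (stretch_eq σ₀ hR)]
  unfold damping
  fun_prop

theorem norm_exp_I_mul_stretch (k σ₀ : ℝ) (hR : 0 ≤ R) (t : ℝ) :
    ‖exp (I * k * stretch σ₀ R t)‖ = Real.exp (-(k * σ₀ * damping R t)) := by
  rw [stretch_eq σ₀ hR, Complex.norm_exp]
  congr 1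
  simp
  ring

theorem norm_exp_neg_I_mul_stretch (k σ₀ : ℝ) (hR : 0 ≤ R) (t : ℝ) :
    ‖exp (-(I * k * stretch σ₀ R t))‖ = Real.exp (k * σ₀ * damping R t) := by
  rw [Complex.exp_neg, norm_inv, norm_exp_I_mul_stretch k σ₀ hR, Real.exp_neg, inv_inv]

theorem norm_exp_neg_mul_exp_le_one (hkσ : 0 ≤ k * σ₀) (hR : 0 ≤ R) (hxt : x ≤ t) :
    ‖exp (-(I * k * stretch σ₀ R x)) * exp (I * k * stretch σ₀ R t)‖ ≤ 1 := by
  rw [norm_mul, norm_exp_neg_I_mul_stretch k σ₀ hR, norm_exp_I_mul_stretch k σ₀ hR,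
    ← Real.exp_add, Real.exp_le_one_iff]
  nlinarith [mul_le_mul_of_nonneg_left (damping_monotone R hxt) hkσ]

theorem norm_exp_mul_exp_neg_le_one (hkσ : 0 ≤ k * σ₀) (hR : 0 ≤ R) (htx : t ≤ x) :
    ‖exp (I * k * stretch σ₀ R x) * exp (-(I * k * stretch σ₀ R t))‖ ≤ 1 := by
  rw [mul_comm]
  exact norm_exp_neg_mul_exp_le_one hkσ hR htx

theorem norm_exp_I_mul_stretch_le (hkσ : 0 ≤ k * σ₀) (hR : 0 ≤ R) (hRRh : R ≤ Rh)
    (ht : t ∈ Icc (-Rh) Rh) :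
    ‖exp (I * k * stretch σ₀ R t)‖ ≤ Real.exp (k * σ₀ * (Rh - R)) := by
  rw [norm_exp_I_mul_stretch k σ₀ hR, Real.exp_le_exp]
  nlinarith [mul_le_mul_of_nonneg_left (abs_damping_le hR hRRh ht) hkσ,
    mul_le_mul_of_nonneg_left (neg_abs_le (damping R t)) hkσ]

theorem norm_exp_neg_I_mul_stretch_le (hkσ : 0 ≤ k * σ₀) (hR : 0 ≤ R) (hRRh : R ≤ Rh)
    (ht : t ∈ Icc (-Rh) Rh) :
    ‖exp (-(I * k * stretch σ₀ R t))‖ ≤ Real.exp (k * σ₀ * (Rh - R)) := by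
  rw [norm_exp_neg_I_mul_stretch k σ₀ hR, Real.exp_le_exp]
  nlinarith [mul_le_mul_of_nonneg_left (abs_damping_le hR hRRh ht) hkσ,
    mul_le_mul_of_nonneg_left (le_abs_self (damping R t)) hkσ]

def alpha (σ₀ R x : ℝ) : ℂ := if |x| < R then 1 else 1 + I * σ₀

theorem norm_alpha_le (hσ₀ : 0 ≤ σ₀) (R x : ℝ) : ‖alpha σ₀ R x‖ ≤ 1 + σ₀ := by
  unfold alpha
  split_ifs
  · simpa using hσ₀
  · refine (norm_add_le _ _).trans ?_
    simp [abs_of_nonneg hσ₀]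

theorem hasDerivAt_stretch (σ₀ : ℝ) (hR : 0 ≤ R) (hx : |x| ≠ R) :
    HasDerivAt (stretch σ₀ R) (alpha σ₀ R x) x := by
  have hid : HasDerivAt (fun t : ℝ => (t : ℂ)) 1 x := (hasDerivAt_id x).ofReal_comp
  rcases lt_or_gt_of_ne hx with hlt | hgt
  · rw [alpha, if_pos hlt]
    refine hid.congr_of_eventuallyEq ?_
    filter_upwards [isOpen_Ioo.mem_nhds (abs_lt.mp hlt)] with t ht
    exact if_pos (abs_le.mpr ⟨ht.1.le, ht.2.le⟩)
  rw [alpha, if_neg hgt.not_gt]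
  rcases le_or_gt 0 x with hx0 | hx0
  · rw [abs_of_nonneg hx0] at hgt
    have hderiv := hid.add ((hid.sub_const (R : ℂ)).const_mul (I * σ₀))
    rw [mul_one] at hderiv
    refine hderiv.congr_of_eventuallyEq ?_
    filter_upwards [isOpen_Ioi.mem_nhds hgt] with t ht
    rw [stretch_eq σ₀ hR, damping_of_le hR (le_of_lt ht), Pi.add_apply]
    push_cast; ring
  · rw [abs_of_neg hx0] at hgt
    have hderiv := hid.add ((hid.add_const (R : ℂ)).const_mul (I * σ₀))
    rw [mul_one] at hderiv
    refine hderiv.congr_of_eventuallyEq ?_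
    filter_upwards [isOpen_Iio.mem_nhds (show x < -R by linarith)] with t ht
    rw [stretch_eq σ₀ hR, damping_of_le_neg hR (le_of_lt ht), Pi.add_apply]
    push_cast; ring

theorem norm_one_div_two_I_mul (hk : 0 ≤ k) : ‖1 / (2 * I * (k : ℂ))‖ = 1 / (2 * k) := by
  simp [abs_of_nonneg hk]

theorem norm_exp_two_I_mul_Rtil (k σ₀ R Rh : ℝ) :
    ‖exp (2 * I * k * Rtil σ₀ R Rh)‖ = Real.exp (-(2 * (k * σ₀ * (Rh - R)))) := by
  rw [Rtil, Complex.norm_exp]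
  congr 1
  simp
  ring

theorem norm_div_sub_inv_le {e A B : ℂ} {a M : ℝ} (ha : 1 ≤ a)
    (he : ‖e‖ = Real.exp (-(2 * a))) (hA : ‖A‖ ≤ Real.exp a * M) (hB : ‖B‖ ≤ Real.exp a * M) :
    ‖(e * A - B) / (e - e⁻¹)‖ ≤ 5 / 2 * Real.exp (-a) * M := by
  have hM : 0 ≤ M := nonneg_of_mul_nonneg_right ((norm_nonneg A).trans hA) (Real.exp_pos a)
  have hexp4 : 5 ≤ Real.exp (4 * a) := by linarith [Real.add_one_le_exp (4 * a)]
  -- `‖e⁻¹‖ = exp (2a)` dominates `‖e‖ = exp (-2a)` because `exp (4a) ≥ 5`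
  have hden : 4 / 5 * Real.exp (2 * a) ≤ ‖e - e⁻¹‖ := by
    have := norm_sub_norm_le e⁻¹ e
    rw [norm_sub_rev, norm_inv, he, ← Real.exp_neg, neg_neg] at this
    have hsplit : Real.exp (4 * a) * Real.exp (-(2 * a)) = Real.exp (2 * a) := by
      rw [← Real.exp_add]; ring_nf
    nlinarith [Real.exp_pos (-(2 * a)), Real.exp_pos (2 * a)]
  have hnum : ‖e * A - B‖ ≤ 2 * Real.exp a * M := by
    have he1 : ‖e‖ ≤ 1 := by rw [he, Real.exp_le_one_iff]; linarith
    calc ‖e * A - B‖ ≤ ‖e‖ * ‖A‖ + ‖B‖ := (norm_sub_le _ _).trans (by rw [norm_mul])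
      _ ≤ 1 * (Real.exp a * M) + Real.exp a * M := by gcongr
      _ = 2 * Real.exp a * M := by ring
  have hden0 : 0 < ‖e - e⁻¹‖ := lt_of_lt_of_le (by positivity) hden
  rw [norm_div, div_le_iff₀ hden0]
  calc ‖e * A - B‖ ≤ 2 * Real.exp a * M := hnum
    _ = 5 / 2 * Real.exp (-a) * M * (4 / 5 * Real.exp (2 * a)) := by
      rw [show Real.exp a = Real.exp (-a) * Real.exp (2 * a) by rw [← Real.exp_add]; ring_nf]
      ring
    _ ≤ 5 / 2 * Real.exp (-a) * M * ‖e - e⁻¹‖ := by gcongr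

variable {f : ℝ → ℂ}

theorem norm_J1_le (hkσ : 0 ≤ k * σ₀) (hR : 0 ≤ R) (hRRh : R ≤ Rh)
    (hf : IntervalIntegrable f volume (-Rh) Rh) :
    ‖J1 k σ₀ R Rh f‖ ≤ Real.exp (k * σ₀ * (Rh - R)) * ∫ t in (-Rh)..Rh, ‖f t‖ :=
  norm_intervalIntegral_mul_le (by linarith)
    (fun _ ht => norm_exp_neg_I_mul_stretch_le hkσ hR hRRh ht) hf

theorem norm_J2_le (hkσ : 0 ≤ k * σ₀) (hR : 0 ≤ R) (hRRh : R ≤ Rh)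
    (hf : IntervalIntegrable f volume (-Rh) Rh) :
    ‖J2 k σ₀ R Rh f‖ ≤ Real.exp (k * σ₀ * (Rh - R)) * ∫ t in (-Rh)..Rh, ‖f t‖ :=
  norm_intervalIntegral_mul_le (by linarith)
    (fun _ ht => norm_exp_I_mul_stretch_le hkσ hR hRRh ht) hf

theorem norm_D1_le (hk : 0 < k) (hσ₀ : 0 ≤ σ₀) (hR : 0 ≤ R) (hRRh : R ≤ Rh)
    (hkL : 1 ≤ k * σ₀ * (Rh - R)) (hf : IntervalIntegrable f volume (-Rh) Rh) :
    ‖D1 k σ₀ R Rh f‖ ≤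
      5 / (4 * k) * Real.exp (-(k * σ₀ * (Rh - R))) * ∫ t in (-Rh)..Rh, ‖f t‖ := by
  have hkσ : 0 ≤ k * σ₀ := by positivity
  rw [D1, mul_div_assoc, Complex.exp_neg, norm_mul, norm_one_div_two_I_mul hk.le]
  have hquot := norm_div_sub_inv_le hkL (norm_exp_two_I_mul_Rtil k σ₀ R Rh)
    (norm_J2_le hkσ hR hRRh hf) (norm_J1_le hkσ hR hRRh hf)
  calc 1 / (2 * k) * ‖_‖
      ≤ 1 / (2 * k) * (5 / 2 * Real.exp (-(k * σ₀ * (Rh - R))) * ∫ t in (-Rh)..Rh, ‖f t‖) := by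
        gcongr
    _ = _ := by field_simp; ring

theorem norm_D2_le (hk : 0 < k) (hσ₀ : 0 ≤ σ₀) (hR : 0 ≤ R) (hRRh : R ≤ Rh)
    (hkL : 1 ≤ k * σ₀ * (Rh - R)) (hf : IntervalIntegrable f volume (-Rh) Rh) :
    ‖D2 k σ₀ R Rh f‖ ≤
      5 / (4 * k) * Real.exp (-(k * σ₀ * (Rh - R))) * ∫ t in (-Rh)..Rh, ‖f t‖ := by
  have hkσ : 0 ≤ k * σ₀ := by positivity
  rw [D2, mul_div_assoc, Complex.exp_neg, norm_mul, norm_one_div_two_I_mul hk.le]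
  have hquot := norm_div_sub_inv_le hkL (norm_exp_two_I_mul_Rtil k σ₀ R Rh)
    (norm_J1_le hkσ hR hRRh hf) (norm_J2_le hkσ hR hRRh hf)
  calc 1 / (2 * k) * ‖_‖
      ≤ 1 / (2 * k) * (5 / 2 * Real.exp (-(k * σ₀ * (Rh - R))) * ∫ t in (-Rh)..Rh, ‖f t‖) := by
        gcongr
    _ = _ := by field_simp; ring

def ampLeft (k σ₀ R Rh : ℝ) (f : ℝ → ℂ) (x : ℝ) : ℂ :=
  D1 k σ₀ R Rh f - 1 / (2 * I * k) * ∫ t in x..Rh, exp (I * k * stretch σ₀ R t) * f t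

def ampRight (k σ₀ R Rh : ℝ) (f : ℝ → ℂ) (x : ℝ) : ℂ :=
  D2 k σ₀ R Rh f - 1 / (2 * I * k) * ∫ t in (-Rh)..x, exp (-(I * k * stretch σ₀ R t)) * f t

theorem uhat_eq (k σ₀ R Rh : ℝ) (f : ℝ → ℂ) (x : ℝ) :
    uhat k σ₀ R Rh f x = exp (-(I * k * stretch σ₀ R x)) * ampLeft k σ₀ R Rh f x +
      exp (I * k * stretch σ₀ R x) * ampRight k σ₀ R Rh f x := by
  rw [uhat, ampLeft, ampRight]
  ring

def uhatDeriv (k σ₀ R Rh : ℝ) (f : ℝ → ℂ) (x : ℝ) : ℂ :=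
  I * k * alpha σ₀ R x * (exp (I * k * stretch σ₀ R x) * ampRight k σ₀ R Rh f x -
    exp (-(I * k * stretch σ₀ R x)) * ampLeft k σ₀ R Rh f x)

theorem hasDerivAt_uhat (hR : 0 ≤ R) (hf : ContinuousOn f (Icc (-Rh) Rh))
    (hx : x ∈ Ioo (-Rh) Rh) (hxR : |x| ≠ R) :
    HasDerivAt (uhat k σ₀ R Rh f) (uhatDeriv k σ₀ R Rh f x) x := by
  have hexp : Continuous fun t => I * k * stretch σ₀ R t :=
    continuous_const.mul (continuous_stretch σ₀ hR)
  have hphase : HasDerivAt (fun y => I * k * stretch σ₀ R y) (I * k * alpha σ₀ R x) x :=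
    (hasDerivAt_stretch σ₀ hR hxR).const_mul _
  have hwaveRight : HasDerivAt (fun y => exp (I * k * stretch σ₀ R y))
      (exp (I * k * stretch σ₀ R x) * (I * k * alpha σ₀ R x)) x := hphase.cexp
  have hwaveLeft : HasDerivAt (fun y => exp (-(I * k * stretch σ₀ R y)))
      (exp (-(I * k * stretch σ₀ R x)) * -(I * k * alpha σ₀ R x)) x := hphase.neg.cexp
  have hampLeft : HasDerivAt (ampLeft k σ₀ R Rh f)
      (1 / (2 * I * k) * (exp (I * k * stretch σ₀ R x) * f x)) x :=
    ((hasDerivAt_integral_left_of_continuousOn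
      (hexp.cexp.continuousOn.mul hf) hx).const_mul (1 / (2 * I * k))).const_sub
        (D1 k σ₀ R Rh f) |>.congr_deriv (by simp only [Pi.mul_apply, mul_neg, neg_neg])
  have hampRight : HasDerivAt (ampRight k σ₀ R Rh f)
      (-(1 / (2 * I * k) * (exp (-(I * k * stretch σ₀ R x)) * f x))) x :=
    ((hasDerivAt_integral_right_of_continuousOn
      (hexp.neg.cexp.continuousOn.mul hf) hx).const_mul (1 / (2 * I * k))).const_sub
        (D2 k σ₀ R Rh f)
  -- the amplitudes contribute `±f(x)/(2ik)` to the derivative, which cancel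
  rw [funext (uhat_eq k σ₀ R Rh f)]
  exact ((hwaveLeft.mul hampLeft).add (hwaveRight.mul hampRight)).congr_deriv
    (by rw [uhatDeriv]; ring)

section Bounds

variable (hk : 0 < k) (hσ₀ : 0 ≤ σ₀) (hR : 0 ≤ R) (hRRh : R ≤ Rh)
  (hkL : 1 ≤ k * σ₀ * (Rh - R)) (hf : IntervalIntegrable f volume (-Rh) Rh)
include hk hσ₀ hR hRRh hkL hf

theorem norm_exp_mul_ampLeft_le (hx : x ∈ Icc (-Rh) Rh) :
    ‖exp (-(I * k * stretch σ₀ R x)) * ampLeft k σ₀ R Rh f x‖ ≤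
      7 / (4 * k) * ∫ t in (-Rh)..Rh, ‖f t‖ := by
  have hkσ : 0 ≤ k * σ₀ := by positivity
  have hD : ‖exp (-(I * k * stretch σ₀ R x)) * D1 k σ₀ R Rh f‖ ≤
      5 / (4 * k) * ∫ t in (-Rh)..Rh, ‖f t‖ := by
    rw [norm_mul]
    calc _ ≤ Real.exp (k * σ₀ * (Rh - R)) *
          (5 / (4 * k) * Real.exp (-(k * σ₀ * (Rh - R))) * ∫ t in (-Rh)..Rh, ‖f t‖) := by
          gcongr
          · exact norm_exp_neg_I_mul_stretch_le hkσ hR hRRh hx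
          · exact norm_D1_le hk hσ₀ hR hRRh hkL hf
      _ = _ := by rw [Real.exp_neg]; field_simp
  have hGreen : ‖exp (-(I * k * stretch σ₀ R x)) *
      ∫ t in x..Rh, exp (I * k * stretch σ₀ R t) * f t‖ ≤ ∫ t in (-Rh)..Rh, ‖f t‖ := by
    rw [← intervalIntegral.integral_const_mul]
    simp_rw [← mul_assoc]
    calc _ ≤ 1 * ∫ t in x..Rh, ‖f t‖ :=
          norm_intervalIntegral_mul_le hx.2
            (fun t ht => norm_exp_neg_mul_exp_le_one hkσ hR ht.1)
            (hf.mono_set (uIcc_subset_uIcc (mem_uIcc_of_le hx.1 hx.2) right_mem_uIcc))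
      _ ≤ _ := by
          rw [one_mul]
          exact integral_mono_interval hx.1 hx.2 le_rfl
            (ae_of_all _ fun t => norm_nonneg (f t)) hf.norm
  rw [ampLeft, mul_sub, mul_left_comm]
  calc _ ≤ _ := norm_sub_le _ _
    _ ≤ 5 / (4 * k) * (∫ t in (-Rh)..Rh, ‖f t‖) +
        1 / (2 * k) * ∫ t in (-Rh)..Rh, ‖f t‖ := by
      rw [norm_mul (1 / _), norm_one_div_two_I_mul hk.le]
      exact add_le_add hD (mul_le_mul_of_nonneg_left hGreen (by positivity))
    _ = _ := by field_simp; ring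

theorem norm_exp_mul_ampRight_le (hx : x ∈ Icc (-Rh) Rh) :
    ‖exp (I * k * stretch σ₀ R x) * ampRight k σ₀ R Rh f x‖ ≤
      7 / (4 * k) * ∫ t in (-Rh)..Rh, ‖f t‖ := by
  have hkσ : 0 ≤ k * σ₀ := by positivity
  have hD : ‖exp (I * k * stretch σ₀ R x) * D2 k σ₀ R Rh f‖ ≤
      5 / (4 * k) * ∫ t in (-Rh)..Rh, ‖f t‖ := by
    rw [norm_mul]
    calc _ ≤ Real.exp (k * σ₀ * (Rh - R)) *
          (5 / (4 * k) * Real.exp (-(k * σ₀ * (Rh - R))) * ∫ t in (-Rh)..Rh, ‖f t‖) := by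
          gcongr
          · exact norm_exp_I_mul_stretch_le hkσ hR hRRh hx
          · exact norm_D2_le hk hσ₀ hR hRRh hkL hf
      _ = _ := by rw [Real.exp_neg]; field_simp
  have hGreen : ‖exp (I * k * stretch σ₀ R x) *
      ∫ t in (-Rh)..x, exp (-(I * k * stretch σ₀ R t)) * f t‖ ≤ ∫ t in (-Rh)..Rh, ‖f t‖ := by
    rw [← intervalIntegral.integral_const_mul]
    simp_rw [← mul_assoc]
    calc _ ≤ 1 * ∫ t in (-Rh)..x, ‖f t‖ :=
          norm_intervalIntegral_mul_le hx.1
            (fun t ht => norm_exp_mul_exp_neg_le_one hkσ hR ht.2)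
            (hf.mono_set (uIcc_subset_uIcc left_mem_uIcc (mem_uIcc_of_le hx.1 hx.2)))
      _ ≤ _ := by
          rw [one_mul]
          exact integral_mono_interval le_rfl hx.1 hx.2
            (ae_of_all _ fun t => norm_nonneg (f t)) hf.norm
  rw [ampRight, mul_sub, mul_left_comm]
  calc _ ≤ _ := norm_sub_le _ _
    _ ≤ 5 / (4 * k) * (∫ t in (-Rh)..Rh, ‖f t‖) +
        1 / (2 * k) * ∫ t in (-Rh)..Rh, ‖f t‖ := by
      rw [norm_mul (1 / _), norm_one_div_two_I_mul hk.le]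
      exact add_le_add hD (mul_le_mul_of_nonneg_left hGreen (by positivity))
    _ = _ := by field_simp; ring

theorem norm_uhat_le (hx : x ∈ Icc (-Rh) Rh) :
    ‖uhat k σ₀ R Rh f x‖ ≤ 7 / (2 * k) * ∫ t in (-Rh)..Rh, ‖f t‖ := by
  rw [uhat_eq]
  calc _ ≤ _ := norm_add_le _ _
    _ ≤ 7 / (4 * k) * (∫ t in (-Rh)..Rh, ‖f t‖) + 7 / (4 * k) * ∫ t in (-Rh)..Rh, ‖f t‖ :=
      add_le_add (norm_exp_mul_ampLeft_le hk hσ₀ hR hRRh hkL hf hx)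
        (norm_exp_mul_ampRight_le hk hσ₀ hR hRRh hkL hf hx)
    _ = _ := by field_simp; ring

theorem norm_uhatDeriv_le (hx : x ∈ Icc (-Rh) Rh) :
    ‖uhatDeriv k σ₀ R Rh f x‖ ≤ 7 / 2 * (1 + σ₀) * ∫ t in (-Rh)..Rh, ‖f t‖ := by
  have hM : 0 ≤ ∫ t in (-Rh)..Rh, ‖f t‖ :=
    integral_nonneg (by linarith) fun t _ => norm_nonneg (f t)
  rw [uhatDeriv, norm_mul, norm_mul, norm_mul, Complex.norm_I, Complex.norm_real,
    Real.norm_of_nonneg hk.le]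
  calc _ ≤ 1 * k * (1 + σ₀) * (7 / (4 * k) * (∫ t in (-Rh)..Rh, ‖f t‖) +
        7 / (4 * k) * ∫ t in (-Rh)..Rh, ‖f t‖) := by
          gcongr
          · exact norm_alpha_le hσ₀ R x
          · refine (norm_sub_le _ _).trans (add_le_add ?_ ?_)
            · exact norm_exp_mul_ampRight_le hk hσ₀ hR hRRh hkL hf hx
            · exact norm_exp_mul_ampLeft_le hk hσ₀ hR hRRh hkL hf hx
    _ = _ := by field_simp; ring

end Bounds

end PML1d

open PML1d Set

/-- One-dimensional case of Corollary 3.2 (energy-norm stability of the truncated PML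
problem): there is a constant `C > 0` depending only on `σ₀` such that for all `k > 0`,
`0 < R < R̂ ≤ 2` with `k σ₀ L ≥ 1` and all continuous `f : [−R̂, R̂] → ℂ`, the truncated
PML solution `û` is differentiable at every `x ∈ (−R̂, R̂)` with `|x| ≠ R` and satisfies
`(∫_{(−R̂,R̂)∖{−R,R}} |û′|² + k² ∫_{−R̂}^{R̂} |û|²)^{1/2} ≤ C (∫_{−R̂}^{R̂} |f|²)^{1/2}`. -/
theorem pml_energy_stability_1d (σ₀ : ℝ) (hσ₀ : 0 < σ₀) :
    ∃ C : ℝ, 0 < C ∧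
      ∀ (k R Rh : ℝ) (f : ℝ → ℂ),
        0 < k → 0 < R → R < Rh → Rh ≤ 2 → 1 ≤ k * σ₀ * (Rh - R) →
        ContinuousOn f (Set.Icc (-Rh) Rh) →
        (∀ x ∈ Set.Ioo (-Rh) Rh, |x| ≠ R → DifferentiableAt ℝ (uhat k σ₀ R Rh f) x) ∧
        Real.sqrt ((∫ x in Set.Ioo (-Rh) Rh \ {-R, R}, ‖deriv (uhat k σ₀ R Rh f) x‖ ^ 2) +
            k ^ 2 * ∫ x in (-Rh)..Rh, ‖uhat k σ₀ R Rh f x‖ ^ 2) ≤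
          C * Real.sqrt (∫ x in (-Rh)..Rh, ‖f x‖ ^ 2) := by
  refine ⟨20 * (1 + σ₀), by positivity, fun k R Rh f hk hR hRRh hRh2 hkL hf =>
    ⟨fun x hx hxR => (hasDerivAt_uhat hR.le hf hx hxR).differentiableAt, ?_⟩⟩
  have hab : -Rh < Rh := by linarith
  have hfi : IntervalIntegrable f volume (-Rh) Rh := hf.intervalIntegrable_of_Icc hab.le
  set M := ∫ t in (-Rh)..Rh, ‖f t‖
  set Q := ∫ t in (-Rh)..Rh, ‖f t‖ ^ 2
  have hQ : 0 ≤ Q := integral_nonneg hab.le fun t _ => sq_nonneg _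
  have hMQ : M ^ 2 ≤ (Rh - -Rh) * Q := sq_intervalIntegral_le_mul_integral_sq hab hfi.norm
    (hf.norm.pow 2 |>.intervalIntegrable_of_Icc hab.le)
  have hderiv : ∫ x in Ioo (-Rh) Rh \ {-R, R}, ‖deriv (uhat k σ₀ R Rh f) x‖ ^ 2 ≤
      (7 / 2 * (1 + σ₀) * M) ^ 2 * (Rh - -Rh) := by
    refine integral_norm_sq_le_of_norm_le (by linarith)
      ((measure_mono sdiff_subset).trans Real.volume_Ioo.le) fun x hx => ?_
    have hxR : |x| ≠ R := fun h => hx.2 (by rcases abs_eq hR.le |>.mp h with h | h <;> simp [h])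
    rw [(hasDerivAt_uhat hR.le hf hx.1 hxR).deriv]
    exact norm_uhatDeriv_le hk hσ₀.le hR.le hRRh.le hkL hfi (Ioo_subset_Icc_self hx.1)
  have huhat : ∫ x in (-Rh)..Rh, ‖uhat k σ₀ R Rh f x‖ ^ 2 ≤
      (7 / (2 * k) * M) ^ 2 * (Rh - -Rh) := by
    rw [intervalIntegral.integral_of_le hab.le]
    exact integral_norm_sq_le_of_norm_le (by linarith) Real.volume_Ioc.le fun x hx =>
      norm_uhat_le hk hσ₀.le hR.le hRRh.le hkL hfi (Ioc_subset_Icc_self hx)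
  have hMV : M ^ 2 * (Rh - -Rh) ≤ 16 * Q := by nlinarith
  rw [show 20 * (1 + σ₀) * √Q = √((20 * (1 + σ₀)) ^ 2 * Q) by
    rw [Real.sqrt_mul (by positivity), Real.sqrt_sq (by positivity)]]
  refine Real.sqrt_le_sqrt ?_
  calc _ ≤ (7 / 2 * (1 + σ₀) * M) ^ 2 * (Rh - -Rh) +
        k ^ 2 * ((7 / (2 * k) * M) ^ 2 * (Rh - -Rh)) :=
        add_le_add hderiv (mul_le_mul_of_nonneg_left huhat (sq_nonneg k))
    _ = 49 / 4 * ((1 + σ₀) ^ 2 + 1) * (M ^ 2 * (Rh - -Rh)) := by field_simp; ring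
    _ ≤ 49 / 4 * ((1 + σ₀) ^ 2 + (1 + σ₀) ^ 2) * (16 * Q) := by gcongr; nlinarith
    _ ≤ (20 * (1 + σ₀)) ^ 2 * Q := by nlinarith [mul_nonneg (sq_nonneg (1 + σ₀)) hQ]
end
end

section
/- One-dimensional case of Corollary 3.5 (H²-estimate for the truncated PML problem): There exists a constant C > 0 depending only on σ₀ such that for all k ≥ 1, 0 < R < R̂ with R̂ ≤ 2 and k·σ₀·L ≥ 1 (where L = R̂ − R), and all continuous f : [−R̂, R̂] → ℂ, the truncated PML solution û is twice differentiable at every x ∈ (−R̂, R̂) with |x| ≠ R and satisfies (∫_{(−R̂,R̂)∖{−R,R}} |û″(x)|² dx)^{1/2} ≤ C k (∫_{−R̂}^{R̂} |f(x)|² dx)^{1/2}. -/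
open MeasureTheory intervalIntegral

noncomputable section

/-!
Write `t̃ = t + i m(t)`; `m` is nondecreasing with `|m| ≤ σ₀ L` on `[−R̂, R̂]`. Away from `|x| = R`
the stretching is locally affine with slope `α(x)`, so differentiating the variation-of-constants
formula twice gives `û'' = (ikα)² û − α f`. Since `m` is nondecreasing, the Volterra kernels
`e^{∓ik(x̃ − t̃)}` have modulus at most `1`; moreover `|J_j| ≤ e^{kσ₀L} ‖f‖₁`, and `kσ₀L ≥ 1` bounds
the denominator of `D_j` below by `e^{2kσ₀L} (1 − e^{−4})`. Hence `|û| ≲ ‖f‖₁ / k ≤ 2 ‖f‖₂ / k`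
(Cauchy–Schwarz, `R̂ ≤ 2`), so `|û''| ≲ k ‖f‖₂ + |f|` pointwise, and squaring and integrating over
an interval of length at most `4` gives the estimate.
-/

open Complex Filter Topology Set

lemma sq_intervalIntegral_le_mul {g : ℝ → ℝ} {a b : ℝ} (hab : a ≤ b)
    (hg : IntervalIntegrable g volume a b) (hg2 : IntervalIntegrable (fun t => g t ^ 2) volume a b) :
    (∫ t in a..b, g t) ^ 2 ≤ (b - a) * ∫ t in a..b, g t ^ 2 := by
  rcases hab.eq_or_lt with rfl | hlt
  · simp
  have hexpand : ∫ t in a..b, ((b - a) * g t - ∫ s in a..b, g s) ^ 2 =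
      (b - a) * ((b - a) * (∫ t in a..b, g t ^ 2) - (∫ t in a..b, g t) ^ 2) := by
    have hsq : ∀ t, ((b - a) * g t - ∫ s in a..b, g s) ^ 2 = (b - a) ^ 2 * g t ^ 2
        - 2 * (b - a) * (∫ s in a..b, g s) * g t + (∫ s in a..b, g s) ^ 2 := fun t => by ring
    simp_rw [hsq]
    rw [intervalIntegral.integral_add ((hg2.const_mul _).sub (hg.const_mul _))
        intervalIntegrable_const, intervalIntegral.integral_sub (hg2.const_mul _) (hg.const_mul _),
      intervalIntegral.integral_const_mul, intervalIntegral.integral_const_mul,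
      intervalIntegral.integral_const, smul_eq_mul]
    ring
  have hnonneg : 0 ≤ ∫ t in a..b, ((b - a) * g t - ∫ s in a..b, g s) ^ 2 :=
    integral_nonneg hab fun _ _ => sq_nonneg _
  rw [hexpand, mul_nonneg_iff_of_pos_left (sub_pos.mpr hlt)] at hnonneg
  linarith

lemma setIntegral_norm_sq_le_of_norm_le_add {α E : Type*} [MeasurableSpace α]
    [NormedAddCommGroup E] {μ : Measure α} {S : Set α} {g : α → E} {h : α → ℝ} {A : ℝ}
    (hS : MeasurableSet S) (hμS : μ S < ⊤) (hg : AEStronglyMeasurable g (μ.restrict S))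
    (hh : IntegrableOn (fun x => h x ^ 2) S μ) (hgh : ∀ x ∈ S, ‖g x‖ ≤ A + h x) :
    ∫ x in S, ‖g x‖ ^ 2 ∂μ ≤ 2 * μ.real S * A ^ 2 + 2 * ∫ x in S, h x ^ 2 ∂μ := by
  have hpt : ∀ x ∈ S, ‖g x‖ ^ 2 ≤ 2 * A ^ 2 + 2 * h x ^ 2 := fun x hx => by
    nlinarith [pow_le_pow_left₀ (norm_nonneg _) (hgh x hx) 2, sq_nonneg (A - h x)]
  have hconst : IntegrableOn (fun _ => 2 * A ^ 2) S μ := integrableOn_const hμS.ne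
  have hbound : IntegrableOn (fun x => 2 * A ^ 2 + 2 * h x ^ 2) S μ := hconst.add (hh.const_mul 2)
  have hg2 : IntegrableOn (fun x => ‖g x‖ ^ 2) S μ :=
    hbound.mono' (hg.norm.pow 2) <| (ae_restrict_mem hS).mono fun x hx => by
      simpa using hpt x hx
  calc ∫ x in S, ‖g x‖ ^ 2 ∂μ ≤ ∫ x in S, (2 * A ^ 2 + 2 * h x ^ 2) ∂μ :=
        setIntegral_mono_on hg2 hbound hS hpt
    _ = _ := by
      rw [MeasureTheory.integral_add hconst (hh.const_mul 2),
        setIntegral_const, MeasureTheory.integral_const_mul, smul_eq_mul]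
      ring

lemma norm_intervalIntegral_mul_le {f g : ℝ → ℂ} {a b c : ℝ} (hab : a ≤ b)
    (hg : ∀ t ∈ Ioc a b, ‖g t‖ ≤ c) (hf : IntervalIntegrable (fun t => ‖f t‖) volume a b) :
    ‖∫ t in a..b, g t * f t‖ ≤ c * ∫ t in a..b, ‖f t‖ := by
  rw [← intervalIntegral.integral_const_mul]
  refine norm_integral_le_of_norm_le hab (ae_of_all _ fun t ht => ?_) (hf.const_mul c)
  rw [norm_mul]
  exact mul_le_mul_of_nonneg_right (hg t ht) (norm_nonneg _)

namespace PML

variable {σ₀ R : ℝ}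

def stretchIm (σ₀ R t : ℝ) : ℝ := σ₀ * (max (t - R) 0 + min (t + R) 0)

/-- The paper's `α`; its value on `|x| = R` never matters. -/
def pmlCoeff (σ₀ R x : ℝ) : ℂ := if |x| < R then 1 else 1 + I * σ₀

lemma stretch_eq (hR : 0 ≤ R) (t : ℝ) : stretch σ₀ R t = t + I * stretchIm σ₀ R t := by
  unfold stretch stretchIm
  split_ifs with h
  · obtain ⟨h₁, h₂⟩ := abs_le.mp h
    simp [max_eq_right (sub_nonpos.mpr h₂), min_eq_right (neg_le_iff_add_nonneg.mp h₁)]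
  · rcases le_or_gt 0 t with ht | ht
    · rw [abs_of_nonneg ht] at h
      rw [abs_of_nonneg ht, Real.sign_of_pos (by linarith), max_eq_left (by linarith),
        min_eq_right (by linarith)]
      push_cast; ring
    · rw [abs_of_neg ht] at h
      rw [abs_of_neg ht, Real.sign_of_neg ht, max_eq_right (by linarith),
        min_eq_left (by linarith)]
      push_cast; ring

lemma stretch_im (hR : 0 ≤ R) (t : ℝ) : (stretch σ₀ R t).im = stretchIm σ₀ R t := by
  simp [stretch_eq hR]

lemma stretchIm_mono (hσ₀ : 0 ≤ σ₀) : Monotone (stretchIm σ₀ R) :=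
  (((monotone_id.add_const (-R)).max monotone_const).add
    ((monotone_id.add_const R).min monotone_const)).const_mul hσ₀

lemma abs_stretchIm_le (hσ₀ : 0 ≤ σ₀) (hR : 0 ≤ R) {Rh t : ℝ} (hRh : R ≤ Rh)
    (ht : t ∈ Icc (-Rh) Rh) : |stretchIm σ₀ R t| ≤ σ₀ * (Rh - R) := by
  have hbot : stretchIm σ₀ R (-Rh) = -(σ₀ * (Rh - R)) := by
    simp only [stretchIm, max_eq_right (by linarith : -Rh - R ≤ 0),
      min_eq_left (by linarith : -Rh + R ≤ 0)]
    ring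
  have htop : stretchIm σ₀ R Rh = σ₀ * (Rh - R) := by
    simp only [stretchIm, max_eq_left (by linarith : 0 ≤ Rh - R),
      min_eq_right (by linarith : 0 ≤ Rh + R)]
    ring
  rw [abs_le, ← hbot, ← htop]
  exact ⟨stretchIm_mono hσ₀ ht.1, stretchIm_mono hσ₀ ht.2⟩

lemma continuous_stretch (hR : 0 ≤ R) : Continuous (stretch σ₀ R) := by
  simp_rw [funext (stretch_eq (σ₀ := σ₀) hR), stretchIm]
  fun_prop

lemma eventually_pmlCoeff_eq {x : ℝ} (hx : |x| ≠ R) :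
    ∀ᶠ y in 𝓝 x, |y| ≠ R ∧ pmlCoeff σ₀ R y = pmlCoeff σ₀ R x := by
  rcases hx.lt_or_gt with h | h
  · filter_upwards [(isOpen_lt continuous_abs continuous_const).mem_nhds h] with y hy
    exact ⟨hy.ne, by simp [pmlCoeff, hy, h]⟩
  · filter_upwards [(isOpen_lt continuous_const continuous_abs).mem_nhds h] with y hy
    exact ⟨hy.ne', by simp [pmlCoeff, hy.not_gt, h.not_gt]⟩

lemma stretch_eventuallyEq_affine (hR : 0 ≤ R) {x : ℝ} (hx : |x| ≠ R) :
    stretch σ₀ R =ᶠ[𝓝 x] fun y => stretch σ₀ R x + pmlCoeff σ₀ R x * (y - x) := by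
  rcases hx.lt_or_gt with h | h
  · filter_upwards [(isOpen_lt continuous_abs continuous_const).mem_nhds h] with y hy
    simp [stretch, pmlCoeff, h, hy.le, h.le]
  · have hpml : pmlCoeff σ₀ R x = 1 + I * σ₀ := by simp [pmlCoeff, h.not_gt]
    rcases lt_abs.mp h with hxR | hxR
    · filter_upwards [lt_mem_nhds hxR] with y hy
      simp only [stretch_eq hR, stretchIm, hpml, max_eq_left (by linarith : 0 ≤ y - R),
        max_eq_left (by linarith : 0 ≤ x - R), min_eq_right (by linarith : 0 ≤ y + R),
        min_eq_right (by linarith : 0 ≤ x + R)]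
      push_cast; ring
    · filter_upwards [gt_mem_nhds (by linarith : x < -R)] with y hy
      simp only [stretch_eq hR, stretchIm, hpml, max_eq_right (by linarith : y - R ≤ 0),
        max_eq_right (by linarith : x - R ≤ 0), min_eq_left (by linarith : y + R ≤ 0),
        min_eq_left (by linarith : x + R ≤ 0)]
      push_cast; ring

lemma hasDerivAt_stretch (hR : 0 ≤ R) {x : ℝ} (hx : |x| ≠ R) :
    HasDerivAt (stretch σ₀ R) (pmlCoeff σ₀ R x) x := by
  refine HasDerivAt.congr_of_eventuallyEq ?_ (stretch_eventuallyEq_affine hR hx)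
  simpa using ((hasDerivAt_id x).ofReal_comp.sub_const (x : ℂ)).const_mul (pmlCoeff σ₀ R x)
    |>.const_add (stretch σ₀ R x)

variable {k Rh : ℝ} {f : ℝ → ℂ}

def expMinus (k σ₀ R x : ℝ) : ℂ := exp (-(I * k * stretch σ₀ R x))

def expPlus (k σ₀ R x : ℝ) : ℂ := exp (I * k * stretch σ₀ R x)

def rightPrimitive (k σ₀ R Rh : ℝ) (f : ℝ → ℂ) (x : ℝ) : ℂ :=
  ∫ t in x..Rh, expPlus k σ₀ R t * f t

def leftPrimitive (k σ₀ R Rh : ℝ) (f : ℝ → ℂ) (x : ℝ) : ℂ :=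
  ∫ t in (-Rh)..x, expMinus k σ₀ R t * f t

lemma uhat_eq (x : ℝ) : uhat k σ₀ R Rh f x =
    -(1 / (2 * I * k)) * expMinus k σ₀ R x * rightPrimitive k σ₀ R Rh f x
      - (1 / (2 * I * k)) * expPlus k σ₀ R x * leftPrimitive k σ₀ R Rh f x
      + D1 k σ₀ R Rh f * expMinus k σ₀ R x + D2 k σ₀ R Rh f * expPlus k σ₀ R x :=
  rfl

lemma expMinus_mul_expPlus (x : ℝ) : expMinus k σ₀ R x * expPlus k σ₀ R x = 1 := by
  rw [expMinus, expPlus, ← Complex.exp_add, neg_add_cancel, Complex.exp_zero]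

lemma norm_expMinus (hR : 0 ≤ R) (x : ℝ) :
    ‖expMinus k σ₀ R x‖ = Real.exp (k * stretchIm σ₀ R x) := by
  simp [expMinus, Complex.norm_exp, stretch_im hR]

lemma norm_expPlus (hR : 0 ≤ R) (x : ℝ) :
    ‖expPlus k σ₀ R x‖ = Real.exp (-(k * stretchIm σ₀ R x)) := by
  simp [expPlus, Complex.norm_exp, stretch_im hR]

lemma continuous_expMinus (hR : 0 ≤ R) : Continuous (expMinus k σ₀ R) :=
  (continuous_const.mul (continuous_stretch hR)).neg.cexp

lemma continuous_expPlus (hR : 0 ≤ R) : Continuous (expPlus k σ₀ R) :=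
  (continuous_const.mul (continuous_stretch hR)).cexp

lemma hasDerivAt_expMinus (hR : 0 ≤ R) {x : ℝ} (hx : |x| ≠ R) :
    HasDerivAt (expMinus k σ₀ R) (expMinus k σ₀ R x * -(I * k * pmlCoeff σ₀ R x)) x :=
  ((hasDerivAt_stretch hR hx).const_mul (I * k)).neg.cexp

lemma hasDerivAt_expPlus (hR : 0 ≤ R) {x : ℝ} (hx : |x| ≠ R) :
    HasDerivAt (expPlus k σ₀ R) (expPlus k σ₀ R x * (I * k * pmlCoeff σ₀ R x)) x :=
  ((hasDerivAt_stretch hR hx).const_mul (I * k)).cexp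

lemma hasDerivAt_leftPrimitive (hR : 0 ≤ R) (hf : ContinuousOn f (Icc (-Rh) Rh)) {x : ℝ}
    (hx : x ∈ Ioo (-Rh) Rh) :
    HasDerivAt (leftPrimitive k σ₀ R Rh f) (expMinus k σ₀ R x * f x) x := by
  have hg := (continuous_expMinus (k := k) (σ₀ := σ₀) hR).continuousOn.mul hf
  exact integral_hasDerivAt_right
    ((hg.mono (Icc_subset_Icc_right hx.2.le)).intervalIntegrable_of_Icc hx.1.le)
    ((hg.mono Ioo_subset_Icc_self).stronglyMeasurableAtFilter isOpen_Ioo x hx)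
    (hg.continuousAt (Icc_mem_nhds hx.1 hx.2))

lemma hasDerivAt_rightPrimitive (hR : 0 ≤ R) (hf : ContinuousOn f (Icc (-Rh) Rh)) {x : ℝ}
    (hx : x ∈ Ioo (-Rh) Rh) :
    HasDerivAt (rightPrimitive k σ₀ R Rh f) (-(expPlus k σ₀ R x * f x)) x := by
  have hg := (continuous_expPlus (k := k) (σ₀ := σ₀) hR).continuousOn.mul hf
  exact integral_hasDerivAt_left
    ((hg.mono (Icc_subset_Icc_left hx.1.le)).intervalIntegrable_of_Icc hx.2.le)
    ((hg.mono Ioo_subset_Icc_self).stronglyMeasurableAtFilter isOpen_Ioo x hx)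
    (hg.continuousAt (Icc_mem_nhds hx.1 hx.2))

/-- `û'` with `α` frozen to the constant `a`: near a point with `|x| ≠ R` it agrees with
`deriv û` for `a = α(x)`, and in this form it can be differentiated once more. -/
def uhatDeriv (k σ₀ R Rh : ℝ) (f : ℝ → ℂ) (a : ℂ) (x : ℝ) : ℂ :=
  a / 2 * (expMinus k σ₀ R x * rightPrimitive k σ₀ R Rh f x
      - expPlus k σ₀ R x * leftPrimitive k σ₀ R Rh f x)
    - I * k * a * (D1 k σ₀ R Rh f * expMinus k σ₀ R x - D2 k σ₀ R Rh f * expPlus k σ₀ R x)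

lemma hasDerivAt_uhat (hk : k ≠ 0) (hR : 0 ≤ R) (hf : ContinuousOn f (Icc (-Rh) Rh)) {x : ℝ}
    (hx : x ∈ Ioo (-Rh) Rh) (hxR : |x| ≠ R) :
    HasDerivAt (uhat k σ₀ R Rh f) (uhatDeriv k σ₀ R Rh f (pmlCoeff σ₀ R x) x) x := by
  have hEm := hasDerivAt_expMinus (k := k) (σ₀ := σ₀) hR hxR
  have hEp := hasDerivAt_expPlus (k := k) (σ₀ := σ₀) hR hxR
  have hFp := hasDerivAt_rightPrimitive (k := k) (σ₀ := σ₀) hR hf hx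
  have hFm := hasDerivAt_leftPrimitive (k := k) (σ₀ := σ₀) hR hf hx
  have H := ((((hEm.const_mul (-(1 / (2 * I * k)))).mul hFp).sub
    ((hEp.const_mul (1 / (2 * I * k))).mul hFm)).add
    (hEm.const_mul (D1 k σ₀ R Rh f))).add (hEp.const_mul (D2 k σ₀ R Rh f))
  refine (H.congr_deriv ?_).congr_of_eventuallyEq (Eventually.of_forall uhat_eq)
  have hk' : (k : ℂ) ≠ 0 := ofReal_ne_zero.mpr hk
  simp only [uhatDeriv]
  field_simp
  ring

lemma hasDerivAt_uhatDeriv (hk : k ≠ 0) (hR : 0 ≤ R) (hf : ContinuousOn f (Icc (-Rh) Rh))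
    {x : ℝ} (hx : x ∈ Ioo (-Rh) Rh) (hxR : |x| ≠ R) :
    HasDerivAt (uhatDeriv k σ₀ R Rh f (pmlCoeff σ₀ R x))
      ((I * k * pmlCoeff σ₀ R x) ^ 2 * uhat k σ₀ R Rh f x - pmlCoeff σ₀ R x * f x) x := by
  have hEm := hasDerivAt_expMinus (k := k) (σ₀ := σ₀) hR hxR
  have hEp := hasDerivAt_expPlus (k := k) (σ₀ := σ₀) hR hxR
  have hFp := hasDerivAt_rightPrimitive (k := k) (σ₀ := σ₀) hR hf hx
  have hFm := hasDerivAt_leftPrimitive (k := k) (σ₀ := σ₀) hR hf hx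
  have H := (((hEm.mul hFp).sub (hEp.mul hFm)).const_mul (pmlCoeff σ₀ R x / 2)).sub
    (((hEm.const_mul (D1 k σ₀ R Rh f)).sub (hEp.const_mul (D2 k σ₀ R Rh f))).const_mul
      (I * k * pmlCoeff σ₀ R x))
  refine H.congr_deriv ?_
  have hk' : (k : ℂ) ≠ 0 := ofReal_ne_zero.mpr hk
  have hprod := expMinus_mul_expPlus (k := k) (σ₀ := σ₀) (R := R) x
  rw [uhat_eq]
  linear_combination (norm := (field_simp; ring)) (-(pmlCoeff σ₀ R x * f x)) * hprod

lemma hasDerivAt_deriv_uhat (hk : k ≠ 0) (hR : 0 ≤ R) (hf : ContinuousOn f (Icc (-Rh) Rh))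
    {x : ℝ} (hx : x ∈ Ioo (-Rh) Rh) (hxR : |x| ≠ R) :
    HasDerivAt (deriv (uhat k σ₀ R Rh f))
      ((I * k * pmlCoeff σ₀ R x) ^ 2 * uhat k σ₀ R Rh f x - pmlCoeff σ₀ R x * f x) x := by
  refine (hasDerivAt_uhatDeriv hk hR hf hx hxR).congr_of_eventuallyEq ?_
  filter_upwards [eventually_pmlCoeff_eq (σ₀ := σ₀) hxR, isOpen_Ioo.mem_nhds hx] with y ⟨hyR, hα⟩ hy
  rw [(hasDerivAt_uhat hk hR hf hy hyR).deriv, hα]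

lemma norm_expMinus_mul_expPlus_le (hσ₀ : 0 ≤ σ₀) (hk : 0 ≤ k) (hR : 0 ≤ R) {x t : ℝ}
    (hxt : x ≤ t) : ‖expMinus k σ₀ R x * expPlus k σ₀ R t‖ ≤ 1 := by
  rw [norm_mul, norm_expMinus hR, norm_expPlus hR, ← Real.exp_add, Real.exp_le_one_iff]
  nlinarith [stretchIm_mono (R := R) hσ₀ hxt]

lemma norm_expMinus_le (hσ₀ : 0 ≤ σ₀) (hk : 0 ≤ k) (hR : 0 ≤ R) (hRh : R ≤ Rh) {t : ℝ}
    (ht : t ∈ Icc (-Rh) Rh) : ‖expMinus k σ₀ R t‖ ≤ Real.exp (k * σ₀ * (Rh - R)) := by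
  rw [norm_expMinus hR, Real.exp_le_exp, mul_assoc]
  exact mul_le_mul_of_nonneg_left (abs_le.mp (abs_stretchIm_le hσ₀ hR hRh ht)).2 hk

lemma norm_expPlus_le (hσ₀ : 0 ≤ σ₀) (hk : 0 ≤ k) (hR : 0 ≤ R) (hRh : R ≤ Rh) {t : ℝ}
    (ht : t ∈ Icc (-Rh) Rh) : ‖expPlus k σ₀ R t‖ ≤ Real.exp (k * σ₀ * (Rh - R)) := by
  rw [norm_expPlus hR, Real.exp_le_exp, ← mul_neg, mul_assoc]
  exact mul_le_mul_of_nonneg_left (neg_le.mp (abs_le.mp (abs_stretchIm_le hσ₀ hR hRh ht)).1) hk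

lemma norm_expMinus_mul_rightPrimitive_le (hσ₀ : 0 ≤ σ₀) (hk : 0 ≤ k) (hR : 0 ≤ R)
    (hf : ContinuousOn f (Icc (-Rh) Rh)) {x : ℝ} (hx : x ∈ Icc (-Rh) Rh) :
    ‖expMinus k σ₀ R x * rightPrimitive k σ₀ R Rh f x‖ ≤ ∫ t in (-Rh)..Rh, ‖f t‖ := by
  have hfi := hf.norm.intervalIntegrable_of_Icc (μ := volume) (hx.1.trans hx.2)
  rw [rightPrimitive, ← intervalIntegral.integral_const_mul]
  simp_rw [← mul_assoc]
  calc _ ≤ 1 * ∫ t in x..Rh, ‖f t‖ := norm_intervalIntegral_mul_le hx.2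
          (fun t ht => norm_expMinus_mul_expPlus_le hσ₀ hk hR ht.1.le)
          (hfi.mono_set (uIcc_subset_uIcc_right (Icc_subset_uIcc hx)))
    _ ≤ ∫ t in (-Rh)..Rh, ‖f t‖ := by
      rw [one_mul]
      exact integral_mono_interval hx.1 hx.2 le_rfl (ae_of_all _ fun _ => norm_nonneg _) hfi

lemma norm_expPlus_mul_leftPrimitive_le (hσ₀ : 0 ≤ σ₀) (hk : 0 ≤ k) (hR : 0 ≤ R)
    (hf : ContinuousOn f (Icc (-Rh) Rh)) {x : ℝ} (hx : x ∈ Icc (-Rh) Rh) :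
    ‖expPlus k σ₀ R x * leftPrimitive k σ₀ R Rh f x‖ ≤ ∫ t in (-Rh)..Rh, ‖f t‖ := by
  have hfi := hf.norm.intervalIntegrable_of_Icc (μ := volume) (hx.1.trans hx.2)
  rw [leftPrimitive, ← intervalIntegral.integral_const_mul]
  simp_rw [← mul_assoc]
  calc _ ≤ 1 * ∫ t in (-Rh)..x, ‖f t‖ := norm_intervalIntegral_mul_le hx.1
          (fun t ht => mul_comm (expPlus k σ₀ R x) _ ▸
            norm_expMinus_mul_expPlus_le hσ₀ hk hR ht.2)
          (hfi.mono_set (uIcc_subset_uIcc_left (Icc_subset_uIcc hx)))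
    _ ≤ ∫ t in (-Rh)..Rh, ‖f t‖ := by
      rw [one_mul]
      exact integral_mono_interval le_rfl hx.1 hx.2 (ae_of_all _ fun _ => norm_nonneg _) hfi

lemma norm_J1_le (hσ₀ : 0 ≤ σ₀) (hk : 0 ≤ k) (hR : 0 ≤ R) (hRh : R ≤ Rh)
    (hf : ContinuousOn f (Icc (-Rh) Rh)) :
    ‖J1 k σ₀ R Rh f‖ ≤ Real.exp (k * σ₀ * (Rh - R)) * ∫ t in (-Rh)..Rh, ‖f t‖ :=
  norm_intervalIntegral_mul_le (by linarith)
    (fun _ ht => norm_expMinus_le hσ₀ hk hR hRh (Ioc_subset_Icc_self ht))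
    (hf.norm.intervalIntegrable_of_Icc (by linarith))

lemma norm_J2_le (hσ₀ : 0 ≤ σ₀) (hk : 0 ≤ k) (hR : 0 ≤ R) (hRh : R ≤ Rh)
    (hf : ContinuousOn f (Icc (-Rh) Rh)) :
    ‖J2 k σ₀ R Rh f‖ ≤ Real.exp (k * σ₀ * (Rh - R)) * ∫ t in (-Rh)..Rh, ‖f t‖ :=
  norm_intervalIntegral_mul_le (by linarith)
    (fun _ ht => norm_expPlus_le hσ₀ hk hR hRh (Ioc_subset_Icc_self ht))
    (hf.norm.intervalIntegrable_of_Icc (by linarith))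

lemma norm_exp_two_I_mul_Rtil :
    ‖exp (2 * I * k * Rtil σ₀ R Rh)‖ = Real.exp (-(2 * (k * σ₀ * (Rh - R)))) := by
  simp [Complex.norm_exp, Rtil]
  ring

lemma norm_exp_neg_two_I_mul_Rtil :
    ‖exp (-(2 * I * k * Rtil σ₀ R Rh))‖ = Real.exp (2 * (k * σ₀ * (Rh - R))) := by
  simp [Complex.norm_exp, Rtil]
  ring

lemma norm_exp_sub_exp_neg_ge (hs : 1 ≤ k * σ₀ * (Rh - R)) :
    Real.exp (k * σ₀ * (Rh - R)) * Real.exp (k * σ₀ * (Rh - R)) * (1 - Real.exp (-4)) ≤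
      ‖exp (2 * I * k * Rtil σ₀ R Rh) - exp (-(2 * I * k * Rtil σ₀ R Rh))‖ := by
  set s := k * σ₀ * (Rh - R)
  have hexp : Real.exp (-(2 * s)) ≤ Real.exp (-4) * Real.exp (2 * s) := by
    rw [← Real.exp_add, Real.exp_le_exp]; linarith
  calc Real.exp s * Real.exp s * (1 - Real.exp (-4))
      ≤ Real.exp (2 * s) - Real.exp (-(2 * s)) := by
        rw [← Real.exp_add, ← two_mul]; linarith
    _ = ‖exp (-(2 * I * k * Rtil σ₀ R Rh))‖ - ‖exp (2 * I * k * Rtil σ₀ R Rh)‖ := by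
        rw [norm_exp_two_I_mul_Rtil, norm_exp_neg_two_I_mul_Rtil]
    _ ≤ _ := by rw [norm_sub_rev]; exact norm_sub_norm_le _ _

lemma norm_one_div_two_I_mul (hk : 0 < k) : ‖(1 : ℂ) / (2 * I * k)‖ = 1 / (2 * k) := by
  simp [abs_of_pos hk]

lemma norm_boundaryCoeff_mul_le {w a b d : ℂ} {P M c : ℝ} (hk : 0 < k) (hP : 0 < P) (hc : 0 < c)
    (hw : ‖w‖ ≤ 1) (ha : ‖a‖ ≤ P * M) (hb : ‖b‖ ≤ P * M) (hd : P * P * c ≤ ‖d‖) :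
    ‖1 / (2 * I * k) * (w * a - b) / d‖ * P ≤ M / (k * c) := by
  have hM : 0 ≤ M := nonneg_of_mul_nonneg_right ((norm_nonneg a).trans ha) hP
  have hnum : ‖w * a - b‖ ≤ 2 * (P * M) := by
    calc ‖w * a - b‖ ≤ 1 * (P * M) + P * M := by
          refine (norm_sub_le _ _).trans (add_le_add ?_ hb)
          rw [norm_mul]
          exact mul_le_mul hw ha (norm_nonneg _) zero_le_one
      _ = 2 * (P * M) := by ring
  rw [norm_div, norm_mul, norm_one_div_two_I_mul hk]
  calc 1 / (2 * k) * ‖w * a - b‖ / ‖d‖ * P ≤ 1 / (2 * k) * (2 * (P * M)) / (P * P * c) * P := by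
        gcongr
    _ = M / (k * c) := by field_simp

lemma one_sub_exp_neg_four_pos : 0 < 1 - Real.exp (-4) :=
  sub_pos.mpr (Real.exp_lt_one_iff.mpr (by norm_num))

def uhatConst : ℝ := 1 + 2 / (1 - Real.exp (-4))

lemma uhatConst_pos : 0 < uhatConst := by
  have := one_sub_exp_neg_four_pos
  unfold uhatConst
  positivity

lemma norm_exp_two_I_mul_Rtil_le_one (hs : 0 ≤ k * σ₀ * (Rh - R)) :
    ‖exp (2 * I * k * Rtil σ₀ R Rh)‖ ≤ 1 := by
  rw [norm_exp_two_I_mul_Rtil, Real.exp_le_one_iff]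
  linarith

lemma norm_D1_mul_expMinus_le (hσ₀ : 0 ≤ σ₀) (hk : 0 < k) (hR : 0 ≤ R) (hRh : R ≤ Rh)
    (hs : 1 ≤ k * σ₀ * (Rh - R)) (hf : ContinuousOn f (Icc (-Rh) Rh)) {x : ℝ}
    (hx : x ∈ Icc (-Rh) Rh) :
    ‖D1 k σ₀ R Rh f * expMinus k σ₀ R x‖ ≤
      (∫ t in (-Rh)..Rh, ‖f t‖) / (k * (1 - Real.exp (-4))) := by
  rw [norm_mul]
  exact (mul_le_mul_of_nonneg_left (norm_expMinus_le hσ₀ hk.le hR hRh hx) (norm_nonneg _)).trans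
    (norm_boundaryCoeff_mul_le hk (Real.exp_pos _) one_sub_exp_neg_four_pos
      (norm_exp_two_I_mul_Rtil_le_one (by linarith)) (norm_J2_le hσ₀ hk.le hR hRh hf)
      (norm_J1_le hσ₀ hk.le hR hRh hf) (norm_exp_sub_exp_neg_ge hs))

lemma norm_D2_mul_expPlus_le (hσ₀ : 0 ≤ σ₀) (hk : 0 < k) (hR : 0 ≤ R) (hRh : R ≤ Rh)
    (hs : 1 ≤ k * σ₀ * (Rh - R)) (hf : ContinuousOn f (Icc (-Rh) Rh)) {x : ℝ}
    (hx : x ∈ Icc (-Rh) Rh) :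
    ‖D2 k σ₀ R Rh f * expPlus k σ₀ R x‖ ≤
      (∫ t in (-Rh)..Rh, ‖f t‖) / (k * (1 - Real.exp (-4))) := by
  rw [norm_mul]
  exact (mul_le_mul_of_nonneg_left (norm_expPlus_le hσ₀ hk.le hR hRh hx) (norm_nonneg _)).trans
    (norm_boundaryCoeff_mul_le hk (Real.exp_pos _) one_sub_exp_neg_four_pos
      (norm_exp_two_I_mul_Rtil_le_one (by linarith)) (norm_J1_le hσ₀ hk.le hR hRh hf)
      (norm_J2_le hσ₀ hk.le hR hRh hf) (norm_exp_sub_exp_neg_ge hs))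

lemma norm_uhat_le (hσ₀ : 0 ≤ σ₀) (hk : 0 < k) (hR : 0 ≤ R) (hRh : R ≤ Rh)
    (hs : 1 ≤ k * σ₀ * (Rh - R)) (hf : ContinuousOn f (Icc (-Rh) Rh)) {x : ℝ}
    (hx : x ∈ Icc (-Rh) Rh) :
    ‖uhat k σ₀ R Rh f x‖ ≤ uhatConst / k * ∫ t in (-Rh)..Rh, ‖f t‖ := by
  have h₁ := norm_expMinus_mul_rightPrimitive_le hσ₀ hk.le hR hf hx
  have h₂ := norm_expPlus_mul_leftPrimitive_le hσ₀ hk.le hR hf hx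
  have h₃ := norm_D1_mul_expMinus_le hσ₀ hk hR hRh hs hf hx
  have h₄ := norm_D2_mul_expPlus_le hσ₀ hk hR hRh hs hf hx
  have hc := norm_one_div_two_I_mul hk
  have hc₀ : 0 < 1 - Real.exp (-4) := one_sub_exp_neg_four_pos
  rw [uhat_eq]
  refine (norm_add_le _ _).trans (add_le_add_left ((norm_add_le _ _).trans
    (add_le_add_left (norm_sub_le _ _) _)) _) |>.trans ?_
  simp only [mul_assoc _ (expMinus k σ₀ R x), mul_assoc _ (expPlus k σ₀ R x),
    norm_mul (-(1 / (2 * I * k))), norm_mul (1 / (2 * I * (k : ℂ))),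
    norm_neg, hc]
  calc _ ≤ 1 / (2 * k) * (∫ t in (-Rh)..Rh, ‖f t‖) + 1 / (2 * k) * (∫ t in (-Rh)..Rh, ‖f t‖)
        + (∫ t in (-Rh)..Rh, ‖f t‖) / (k * (1 - Real.exp (-4)))
        + (∫ t in (-Rh)..Rh, ‖f t‖) / (k * (1 - Real.exp (-4))) := by gcongr
    _ = _ := by rw [uhatConst]; field_simp; ring

lemma norm_pmlCoeff_le (hσ₀ : 0 ≤ σ₀) (x : ℝ) : ‖pmlCoeff σ₀ R x‖ ≤ 1 + σ₀ := by
  unfold pmlCoeff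
  split_ifs
  · simpa using hσ₀
  · exact (norm_add_le _ _).trans (by simp [abs_of_nonneg hσ₀])

lemma norm_deriv_deriv_uhat_le (hσ₀ : 0 ≤ σ₀) (hk : 0 < k) (hR : 0 ≤ R) (hRh : R ≤ Rh)
    (hs : 1 ≤ k * σ₀ * (Rh - R)) (hf : ContinuousOn f (Icc (-Rh) Rh)) {x : ℝ}
    (hx : x ∈ Ioo (-Rh) Rh) (hxR : |x| ≠ R) :
    ‖deriv (deriv (uhat k σ₀ R Rh f)) x‖ ≤
      k * ((1 + σ₀) ^ 2 * uhatConst * ∫ t in (-Rh)..Rh, ‖f t‖)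
        + (1 + σ₀) * ‖f x‖ := by
  have hα := norm_pmlCoeff_le (R := R) hσ₀ x
  have hu := norm_uhat_le hσ₀ hk hR hRh hs hf (Ioo_subset_Icc_self hx)
  rw [(hasDerivAt_deriv_uhat hk.ne' hR hf hx hxR).deriv]
  refine (norm_sub_le _ _).trans (add_le_add ?_ ?_)
  · calc ‖(I * k * pmlCoeff σ₀ R x) ^ 2 * uhat k σ₀ R Rh f x‖
        = k ^ 2 * ‖pmlCoeff σ₀ R x‖ ^ 2 * ‖uhat k σ₀ R Rh f x‖ := by
          simp [abs_of_pos hk, mul_pow]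
      _ ≤ k ^ 2 * (1 + σ₀) ^ 2 *
          (uhatConst / k * ∫ t in (-Rh)..Rh, ‖f t‖) := by gcongr
      _ = _ := by field_simp
  · rw [norm_mul]
    gcongr


lemma integral_sq_deriv_deriv_uhat_le (hσ₀ : 0 ≤ σ₀) (hk : 0 < k) (hR : 0 < R) (hRRh : R < Rh)
    (hs : 1 ≤ k * σ₀ * (Rh - R)) (hf : ContinuousOn f (Icc (-Rh) Rh)) :
    ∫ x in Ioo (-Rh) Rh \ {-R, R}, ‖deriv (deriv (uhat k σ₀ R Rh f)) x‖ ^ 2 ≤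
      4 * Rh * (k * ((1 + σ₀) ^ 2 * uhatConst * ∫ t in (-Rh)..Rh, ‖f t‖)) ^ 2
        + 2 * ((1 + σ₀) ^ 2 * ∫ x in (-Rh)..Rh, ‖f x‖ ^ 2) := by
  have hRh : -Rh ≤ Rh := by linarith
  have hSIoc : Ioo (-Rh) Rh \ {-R, R} ⊆ Ioc (-Rh) Rh := sdiff_subset.trans Ioo_subset_Ioc_self
  have hSvol : volume.real (Ioo (-Rh) Rh \ {-R, R}) ≤ 2 * Rh :=
    (measureReal_mono hSIoc measure_Ioc_lt_top.ne).trans_eq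
      (by rw [Real.volume_real_Ioc_of_le hRh]; ring)
  have hfS : IntegrableOn (fun x => ‖f x‖ ^ 2) (Ioc (-Rh) Rh) :=
    ((hf.norm.pow 2).integrableOn_Icc).mono_set Ioc_subset_Icc_self
  have hfSN : ∫ x in Ioo (-Rh) Rh \ {-R, R}, ((1 + σ₀) * ‖f x‖) ^ 2 ≤
      (1 + σ₀) ^ 2 * ∫ x in (-Rh)..Rh, ‖f x‖ ^ 2 := by
    simp_rw [mul_pow]
    rw [MeasureTheory.integral_const_mul, intervalIntegral.integral_of_le hRh]
    exact mul_le_mul_of_nonneg_left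
      (setIntegral_mono_set hfS (ae_of_all _ fun _ => sq_nonneg _) hSIoc.eventuallyLE)
      (sq_nonneg _)
  refine (setIntegral_norm_sq_le_of_norm_le_add (h := fun x => (1 + σ₀) * ‖f x‖)
    (measurableSet_Ioo.diff (toFinite _).measurableSet)
    ((measure_mono hSIoc).trans_lt measure_Ioc_lt_top) (measurable_deriv _).aestronglyMeasurable
    (((continuousOn_const.mul hf.norm).pow 2).integrableOn_Icc.mono_set
      (hSIoc.trans Ioc_subset_Icc_self))
    fun x hx => norm_deriv_deriv_uhat_le hσ₀ hk hR.le hRRh.le hs hf hx.1 fun h =>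
      hx.2 (by rcases (abs_eq hR.le).mp h with h | h <;> simp [h])).trans ?_
  have := mul_le_mul_of_nonneg_right hSvol
    (sq_nonneg (k * ((1 + σ₀) ^ 2 * uhatConst * ∫ t in (-Rh)..Rh, ‖f t‖)))
  linarith

lemma integral_sq_deriv_deriv_uhat_le_sq_mul (hσ₀ : 0 ≤ σ₀) (hk : 1 ≤ k) (hR : 0 < R)
    (hRRh : R < Rh) (hRh2 : Rh ≤ 2) (hs : 1 ≤ k * σ₀ * (Rh - R))
    (hf : ContinuousOn f (Icc (-Rh) Rh)) :
    ∫ x in Ioo (-Rh) Rh \ {-R, R}, ‖deriv (deriv (uhat k σ₀ R Rh f)) x‖ ^ 2 ≤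
      ((1 + σ₀) ^ 2 * (6 * uhatConst + 2) * k) ^ 2 * ∫ x in (-Rh)..Rh, ‖f x‖ ^ 2 := by
  have hc₀ := uhatConst_pos
  have hRh : -Rh ≤ Rh := by linarith
  set M := ∫ t in (-Rh)..Rh, ‖f t‖
  set N := ∫ x in (-Rh)..Rh, ‖f x‖ ^ 2
  have hN : 0 ≤ N := integral_nonneg hRh fun _ _ => sq_nonneg _
  have hMN : M ^ 2 ≤ 4 * N := (sq_intervalIntegral_le_mul hRh
    (hf.norm.intervalIntegrable_of_Icc hRh) ((hf.norm.pow 2).intervalIntegrable_of_Icc hRh)).trans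
    (by nlinarith)
  have hkB : 1 ≤ k ^ 2 * (1 + σ₀) ^ 2 :=
    one_le_mul_of_one_le_of_one_le (one_le_pow₀ hk) (one_le_pow₀ (by linarith))
  calc _ ≤ 4 * Rh * (k * ((1 + σ₀) ^ 2 * uhatConst * M)) ^ 2 + 2 * ((1 + σ₀) ^ 2 * N) :=
        integral_sq_deriv_deriv_uhat_le hσ₀ (by linarith) hR hRRh hs hf
    _ ≤ 8 * (k ^ 2 * ((1 + σ₀) ^ 2) ^ 2 * uhatConst ^ 2 * M ^ 2) + 2 * ((1 + σ₀) ^ 2 * N) := by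
        rw [show (k * ((1 + σ₀) ^ 2 * uhatConst * M)) ^ 2
          = k ^ 2 * ((1 + σ₀) ^ 2) ^ 2 * uhatConst ^ 2 * M ^ 2 by ring]
        gcongr
        linarith
    _ ≤ 8 * (k ^ 2 * ((1 + σ₀) ^ 2) ^ 2 * uhatConst ^ 2 * (4 * N)) + 2 * ((1 + σ₀) ^ 2 * N) := by
        gcongr
    _ ≤ _ := by
        have h₁ : 0 ≤ k ^ 2 * ((1 + σ₀) ^ 2) ^ 2 * N * (4 * uhatConst ^ 2 + 24 * uhatConst) := by
          positivity
        have h₂ : (1 + σ₀) ^ 2 * N ≤ k ^ 2 * (1 + σ₀) ^ 2 * ((1 + σ₀) ^ 2 * N) :=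
          le_mul_of_one_le_left (by positivity) hkB
        nlinarith

end PML

open PML

/-- One-dimensional case of Corollary 3.5 (H²-estimate for the truncated PML problem):
there is a constant `C > 0` depending only on `σ₀` such that for all `k ≥ 1`,
`0 < R < R̂ ≤ 2` with `k σ₀ L ≥ 1` and all continuous `f : [−R̂, R̂] → ℂ`, the truncated
PML solution `û` is twice differentiable at every `x ∈ (−R̂, R̂)` with `|x| ≠ R` and
satisfies `(∫_{(−R̂,R̂)∖{−R,R}} |û″|²)^{1/2} ≤ C k (∫_{−R̂}^{R̂} |f|²)^{1/2}`. -/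
theorem pml_H2_stability_1d (σ₀ : ℝ) (hσ₀ : 0 < σ₀) :
    ∃ C : ℝ, 0 < C ∧
      ∀ (k R Rh : ℝ) (f : ℝ → ℂ),
        1 ≤ k → 0 < R → R < Rh → Rh ≤ 2 → 1 ≤ k * σ₀ * (Rh - R) →
        ContinuousOn f (Set.Icc (-Rh) Rh) →
        (∀ x ∈ Set.Ioo (-Rh) Rh, |x| ≠ R →
          DifferentiableAt ℝ (uhat k σ₀ R Rh f) x ∧
            DifferentiableAt ℝ (deriv (uhat k σ₀ R Rh f)) x) ∧
        Real.sqrt (∫ x in Set.Ioo (-Rh) Rh \ {-R, R},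
            ‖deriv (deriv (uhat k σ₀ R Rh f)) x‖ ^ 2) ≤
          C * k * Real.sqrt (∫ x in (-Rh)..Rh, ‖f x‖ ^ 2) := by
  have hc₀ := uhatConst_pos
  refine ⟨(1 + σ₀) ^ 2 * (6 * uhatConst + 2), by positivity, ?_⟩
  intro k R Rh f hk hR hRRh hRh2 hs hf
  have hk₀ : 0 < k := by linarith
  refine ⟨fun x hx hxR => ⟨(hasDerivAt_uhat hk₀.ne' hR.le hf hx hxR).differentiableAt,
    (hasDerivAt_deriv_uhat hk₀.ne' hR.le hf hx hxR).differentiableAt⟩, ?_⟩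
  rw [Real.sqrt_le_left (by positivity), mul_pow,
    Real.sq_sqrt (integral_nonneg (by linarith) fun _ _ => sq_nonneg _)]
  exact integral_sq_deriv_deriv_uhat_le_sq_mul hσ₀.le hk hR hRRh hRh2 hs hf
end
end

section
/- The one-dimensional truncated PML solution solves the truncated PML boundary value problem: if f : [−R̂, R̂] → ℂ is continuous, then û(−R̂) = û(R̂) = 0, and at every x ∈ (−R̂, R̂) with |x| ≠ R the function û is twice differentiable and satisfies −(1/α(x)) û″(x) − α(x) k² û(x) = f(x). -/
open MeasureTheory intervalIntegral

noncomputable section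

/-- The PML coefficient `α`: `α(t) = 1` for `|t| < R` and `α(t) = 1 + iσ₀` for `|t| > R`. -/
def alphaPML (σ₀ R t : ℝ) : ℂ := if |t| < R then 1 else 1 + Complex.I * σ₀

/-!
`û` is the variation-of-parameters solution built from the fundamental solutions `e^{±ik x̃}`,
and `D₁, D₂` are exactly the coefficients that make it vanish at `±R̂`; the denominator is
`2 sinh(2ik R̂̃)`, nonzero because `Re(2ik R̂̃) = -2kσ₀L ≠ 0`. Away from `|x| = R` the stretching
is locally affine with slope `α`, so `(e^{±ik x̃})′ = ±ikα e^{±ik x̃}`. Flipping the signs of the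
`e^{-ik x̃}` terms of `û` gives a function `w` with `û′ = ikα w` and `w′ = ikα û − f/(ik)`, and
since `α` is locally constant, `û″ = −k²α² û − α f`.
-/

open Complex Set Filter Topology

section IntervalIntegral

variable {E : Type*} [NormedAddCommGroup E] [NormedSpace ℝ E] [CompleteSpace E]
  {g : ℝ → E} {a b x : ℝ}

theorem hasDerivAt_integral_right_of_continuousOn (hg : ContinuousOn g (Icc a b))
    (hx : x ∈ Ioo a b) : HasDerivAt (fun y => ∫ t in a..y, g t) (g x) x :=
  integral_hasDerivAt_right
    ((hg.mono (Icc_subset_Icc_right hx.2.le)).intervalIntegrable_of_Icc hx.1.le)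
    ((hg.mono Ioo_subset_Icc_self).stronglyMeasurableAtFilter isOpen_Ioo x hx)
    (hg.continuousAt (Icc_mem_nhds hx.1 hx.2))

theorem hasDerivAt_integral_left_of_continuousOn (hg : ContinuousOn g (Icc a b))
    (hx : x ∈ Ioo a b) : HasDerivAt (fun y => ∫ t in y..b, g t) (-g x) x :=
  integral_hasDerivAt_left
    ((hg.mono (Icc_subset_Icc_left hx.1.le)).intervalIntegrable_of_Icc hx.2.le)
    ((hg.mono Ioo_subset_Icc_self).stronglyMeasurableAtFilter isOpen_Ioo x hx)
    (hg.continuousAt (Icc_mem_nhds hx.1 hx.2))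

end IntervalIntegral

theorem hasDerivAt_deriv_of_eventually_hasDerivAt_smul {𝕜 F R : Type*}
    [NontriviallyNormedField 𝕜] [NormedAddCommGroup F] [NormedSpace 𝕜 F] [Monoid R]
    [DistribMulAction R F] [SMulCommClass 𝕜 R F] [ContinuousConstSMul R F]
    {u w : 𝕜 → F} {c : R} {w' : F} {x : 𝕜}
    (hu : ∀ᶠ y in 𝓝 x, HasDerivAt u (c • w y) y) (hw : HasDerivAt w w' x) :
    HasDerivAt (deriv u) (c • w') x :=
  (hw.const_smul c).congr_of_eventuallyEq (hu.mono fun _ hy => hy.deriv)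

theorem cexp_sub_cexp_neg_ne_zero {z : ℂ} (hz : z.re ≠ 0) : exp z - exp (-z) ≠ 0 := by
  intro h
  have hnorm := congrArg norm (sub_eq_zero.mp h)
  rw [norm_exp, norm_exp, Real.exp_eq_exp, neg_re] at hnorm
  exact hz (by linarith)

theorem cexp_two_mul_combination (z A B : ℂ) (hd : exp (2 * z) - exp (-(2 * z)) ≠ 0) :
    (exp (2 * z) * A - B) / (exp (2 * z) - exp (-(2 * z))) * exp z +
      (exp (2 * z) * B - A) / (exp (2 * z) - exp (-(2 * z))) * exp (-z) = A * exp z := by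
  have hE : exp z ≠ 0 := exp_ne_zero z
  rw [exp_neg, exp_neg, two_mul, exp_add] at *
  have h4 : exp z ^ 4 - 1 ≠ 0 := fun h => hd (by field_simp; linear_combination h)
  field_simp
  ring

section Stretch

variable {σ₀ R : ℝ}

theorem stretch_of_abs_le {t : ℝ} (ht : |t| ≤ R) : stretch σ₀ R t = t := if_pos ht

theorem stretch_of_lt (hR : 0 ≤ R) {t : ℝ} (ht : R < t) :
    stretch σ₀ R t = t + I * σ₀ * (t - R) := by
  rw [stretch, if_neg (by rw [abs_of_pos (hR.trans_lt ht)]; exact ht.not_ge),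
    abs_of_pos (hR.trans_lt ht), Real.sign_of_pos (hR.trans_lt ht)]
  push_cast
  ring

theorem stretch_of_lt_neg (hR : 0 ≤ R) {t : ℝ} (ht : t < -R) :
    stretch σ₀ R t = t + I * σ₀ * (t + R) := by
  have ht0 : t < 0 := by linarith
  rw [stretch, if_neg (by rw [abs_of_neg ht0]; linarith), abs_of_neg ht0, Real.sign_of_neg ht0]
  push_cast
  ring

theorem stretch_eq_add_max (hR : 0 ≤ R) (t : ℝ) :
    stretch σ₀ R t = t + I * σ₀ * ((max (t - R) 0 - max (-t - R) 0 : ℝ) : ℂ) := by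
  rcases lt_or_ge R t with ht | ht
  · rw [stretch_of_lt hR ht, max_eq_left (by linarith), max_eq_right (by linarith)]
    push_cast
    ring
  rcases lt_or_ge t (-R) with ht' | ht'
  · rw [stretch_of_lt_neg hR ht', max_eq_right (by linarith), max_eq_left (by linarith)]
    push_cast
    ring
  · rw [stretch_of_abs_le (abs_le.mpr ⟨ht', ht⟩), max_eq_right (by linarith),
      max_eq_right (by linarith)]
    simp

theorem continuous_stretch (hR : 0 ≤ R) : Continuous (stretch σ₀ R) := by
  simp only [funext (stretch_eq_add_max hR)]
  fun_prop

theorem alphaPML_ne_zero (t : ℝ) : alphaPML σ₀ R t ≠ 0 := by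
  unfold alphaPML
  split_ifs <;> simp [Complex.ext_iff]

theorem alphaPML_eventuallyEq {x : ℝ} (hx : |x| ≠ R) :
    alphaPML σ₀ R =ᶠ[𝓝 x] fun _ => alphaPML σ₀ R x := by
  rcases hx.lt_or_gt with h | h
  · filter_upwards [(isOpen_lt continuous_abs continuous_const).mem_nhds h] with y hy
    simp only [alphaPML, if_pos hy, if_pos h]
  · filter_upwards [(isOpen_lt continuous_const continuous_abs).mem_nhds h] with y hy
    simp only [alphaPML, if_neg hy.not_gt, if_neg h.not_gt]

theorem stretch_eventuallyEq_affine (hR : 0 ≤ R) {x : ℝ} (hx : |x| ≠ R) :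
    stretch σ₀ R =ᶠ[𝓝 x] fun t => stretch σ₀ R x + alphaPML σ₀ R x * (t - x) := by
  rcases hx.lt_or_gt with h | h
  · filter_upwards [(isOpen_lt continuous_abs continuous_const).mem_nhds h] with t ht
    rw [stretch_of_abs_le ht.le, stretch_of_abs_le h.le, alphaPML, if_pos h]
    ring
  rw [alphaPML, if_neg h.not_gt]
  rcases lt_abs.mp h with h | h
  · filter_upwards [Ioi_mem_nhds h] with t ht
    rw [stretch_of_lt hR ht, stretch_of_lt hR h]
    ring
  · filter_upwards [Iio_mem_nhds (lt_neg_of_lt_neg h)] with t ht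
    rw [stretch_of_lt_neg hR ht, stretch_of_lt_neg hR (lt_neg_of_lt_neg h)]
    ring

theorem hasDerivAt_stretch (hR : 0 ≤ R) {x : ℝ} (hx : |x| ≠ R) :
    HasDerivAt (stretch σ₀ R) (alphaPML σ₀ R x) x := by
  have h := (((hasDerivAt_id x).ofReal_comp.sub_const (x : ℂ)).const_mul
    (alphaPML σ₀ R x)).const_add (stretch σ₀ R x)
  simp only [ofReal_one, mul_one] at h
  exact h.congr_of_eventuallyEq (stretch_eventuallyEq_affine hR hx)

end Stretch

section BoundaryValues

variable {k σ₀ R Rh : ℝ} {f : ℝ → ℂ}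

theorem stretch_Rh (hR : 0 ≤ R) (hRRh : R < Rh) : stretch σ₀ R Rh = Rtil σ₀ R Rh :=
  stretch_of_lt hR hRRh

theorem stretch_neg_Rh (hR : 0 ≤ R) (hRRh : R < Rh) : stretch σ₀ R (-Rh) = -Rtil σ₀ R Rh := by
  rw [stretch_of_lt_neg hR (neg_lt_neg hRRh), Rtil]
  push_cast
  ring

theorem re_two_mul_I_mul_Rtil : (2 * I * k * Rtil σ₀ R Rh).re = -(2 * k * σ₀ * (Rh - R)) := by
  simp [Rtil]
  ring

theorem cexp_two_mul_Rtil_sub_ne_zero (hk : k ≠ 0) (hσ₀ : σ₀ ≠ 0) (hRRh : R ≠ Rh) :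
    exp (2 * I * k * Rtil σ₀ R Rh) - exp (-(2 * I * k * Rtil σ₀ R Rh)) ≠ 0 :=
  cexp_sub_cexp_neg_ne_zero <| by
    rw [re_two_mul_I_mul_Rtil]
    exact neg_ne_zero.mpr <|
      mul_ne_zero (mul_ne_zero (mul_ne_zero two_ne_zero hk) hσ₀) (sub_ne_zero.mpr hRRh.symm)

theorem uhat_neg_Rh (hk : k ≠ 0) (hσ₀ : σ₀ ≠ 0) (hR : 0 ≤ R) (hRRh : R < Rh) :
    uhat k σ₀ R Rh f (-Rh) = 0 := by
  have hd := cexp_two_mul_Rtil_sub_ne_zero hk hσ₀ hRRh.ne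
  have hJ2 : (∫ t in (-Rh)..Rh, exp (I * k * stretch σ₀ R t) * f t) = J2 k σ₀ R Rh f := rfl
  have h2z : 2 * I * k * Rtil σ₀ R Rh = 2 * (I * k * Rtil σ₀ R Rh) := by ring
  rw [h2z] at hd
  simp only [uhat, D1, D2, stretch_neg_Rh hR hRRh, integral_same, hJ2, h2z, mul_neg, neg_neg]
  linear_combination (1 / (2 * I * k)) *
    cexp_two_mul_combination (I * k * Rtil σ₀ R Rh) (J2 k σ₀ R Rh f) (J1 k σ₀ R Rh f) hd

theorem uhat_Rh (hk : k ≠ 0) (hσ₀ : σ₀ ≠ 0) (hR : 0 ≤ R) (hRRh : R < Rh) :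
    uhat k σ₀ R Rh f Rh = 0 := by
  have hd := cexp_two_mul_Rtil_sub_ne_zero hk hσ₀ hRRh.ne
  have hJ1 : (∫ t in (-Rh)..Rh, exp (-(I * k * stretch σ₀ R t)) * f t) = J1 k σ₀ R Rh f := rfl
  have h2z : 2 * I * k * Rtil σ₀ R Rh = 2 * (I * k * Rtil σ₀ R Rh) := by ring
  rw [h2z] at hd
  simp only [uhat, D1, D2, stretch_Rh hR hRRh, integral_same, hJ1, h2z]
  linear_combination (1 / (2 * I * k)) *
    cexp_two_mul_combination (I * k * Rtil σ₀ R Rh) (J1 k σ₀ R Rh f) (J2 k σ₀ R Rh f) hd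

end BoundaryValues

section Derivatives

variable {k σ₀ R Rh : ℝ} {f : ℝ → ℂ}

def uhatFlux (k σ₀ R Rh : ℝ) (f : ℝ → ℂ) (x : ℝ) : ℂ :=
  (1 / (2 * I * k)) * exp (-(I * k * stretch σ₀ R x)) *
      (∫ t in x..Rh, exp (I * k * stretch σ₀ R t) * f t)
    - (1 / (2 * I * k)) * exp (I * k * stretch σ₀ R x) *
      (∫ t in (-Rh)..x, exp (-(I * k * stretch σ₀ R t)) * f t)
    - D1 k σ₀ R Rh f * exp (-(I * k * stretch σ₀ R x))
    + D2 k σ₀ R Rh f * exp (I * k * stretch σ₀ R x)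

theorem hasDerivAt_uhat_and_uhatFlux (hR : 0 ≤ R) (hf : ContinuousOn f (Icc (-Rh) Rh))
    {x : ℝ} (hx : x ∈ Ioo (-Rh) Rh) (hxR : |x| ≠ R) :
    HasDerivAt (uhat k σ₀ R Rh f) (I * k * alphaPML σ₀ R x * uhatFlux k σ₀ R Rh f x) x ∧
      HasDerivAt (uhatFlux k σ₀ R Rh f)
        (I * k * alphaPML σ₀ R x * uhat k σ₀ R Rh f x - 1 / (I * k) * f x) x := by
  have hstretch := continuous_stretch (σ₀ := σ₀) hR
  have hφ := (hasDerivAt_stretch (σ₀ := σ₀) hR hxR).const_mul (I * k)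
  have hEp := hφ.cexp
  have hEm : HasDerivAt (fun y => exp (-(I * k * stretch σ₀ R y)))
      (exp (-(I * k * stretch σ₀ R x)) * -(I * k * alphaPML σ₀ R x)) x :=
    hφ.neg.cexp
  have hF := hasDerivAt_integral_left_of_continuousOn
    (g := fun t => exp (I * k * stretch σ₀ R t) * f t) (by fun_prop) hx
  have hG := hasDerivAt_integral_right_of_continuousOn
    (g := fun t => exp (-(I * k * stretch σ₀ R t)) * f t) (by fun_prop) hx
  have hEE : exp (-(I * k * stretch σ₀ R x)) * exp (I * k * stretch σ₀ R x) = 1 := by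
    rw [← exp_add, neg_add_cancel, exp_zero]
  constructor
  · have hu : HasDerivAt (uhat k σ₀ R Rh f) _ x :=
      ((((hEm.const_mul (-(1 / (2 * I * k)))).mul hF).sub
        ((hEp.const_mul (1 / (2 * I * k))).mul hG)).add
        (hEm.const_mul (D1 k σ₀ R Rh f))).add (hEp.const_mul (D2 k σ₀ R Rh f))
    convert hu using 1
    simp only [uhatFlux]
    ring
  · have hw : HasDerivAt (uhatFlux k σ₀ R Rh f) _ x :=
      ((((hEm.const_mul (1 / (2 * I * k))).mul hF).sub
        ((hEp.const_mul (1 / (2 * I * k))).mul hG)).sub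
        (hEm.const_mul (D1 k σ₀ R Rh f))).add (hEp.const_mul (D2 k σ₀ R Rh f))
    convert hw using 1
    simp only [uhat]
    linear_combination (1 / (I * k) * f x) * hEE

theorem hasDerivAt_deriv_uhat (hR : 0 ≤ R) (hf : ContinuousOn f (Icc (-Rh) Rh))
    {x : ℝ} (hx : x ∈ Ioo (-Rh) Rh) (hxR : |x| ≠ R) :
    HasDerivAt (deriv (uhat k σ₀ R Rh f)) (I * k * alphaPML σ₀ R x *
      (I * k * alphaPML σ₀ R x * uhat k σ₀ R Rh f x - 1 / (I * k) * f x)) x := by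
  have hnear : ∀ᶠ y in 𝓝 x,
      HasDerivAt (uhat k σ₀ R Rh f) ((I * k * alphaPML σ₀ R x) • uhatFlux k σ₀ R Rh f y) y := by
    filter_upwards [isOpen_Ioo.mem_nhds hx,
      (isOpen_ne_fun continuous_abs continuous_const).mem_nhds hxR,
      alphaPML_eventuallyEq hxR] with y hy hyR hα
    have hu := (hasDerivAt_uhat_and_uhatFlux (k := k) (σ₀ := σ₀) hR hf hy hyR).1
    rwa [hα] at hu
  have h := hasDerivAt_deriv_of_eventually_hasDerivAt_smul hnear
    (hasDerivAt_uhat_and_uhatFlux hR hf hx hxR).2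
  rwa [smul_eq_mul] at h

end Derivatives

/-- The one-dimensional truncated PML solution solves the truncated PML boundary value
problem: if `f : [−R̂, R̂] → ℂ` is continuous, then `û(−R̂) = û(R̂) = 0` and at every
`x ∈ (−R̂, R̂)` with `|x| ≠ R` the function `û` is twice differentiable and satisfies
`−(1/α(x)) û″(x) − α(x) k² û(x) = f(x)`. -/
theorem pml_solution_solves_bvp_1d (k σ₀ R Rh : ℝ) (f : ℝ → ℂ)
    (hk : 0 < k) (hσ₀ : 0 < σ₀) (hR : 0 < R) (hRRh : R < Rh)
    (hf : ContinuousOn f (Set.Icc (-Rh) Rh)) :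
    uhat k σ₀ R Rh f (-Rh) = 0 ∧ uhat k σ₀ R Rh f Rh = 0 ∧
      ∀ x ∈ Set.Ioo (-Rh) Rh, |x| ≠ R →
        DifferentiableAt ℝ (uhat k σ₀ R Rh f) x ∧
        DifferentiableAt ℝ (deriv (uhat k σ₀ R Rh f)) x ∧
        -(1 / alphaPML σ₀ R x) * deriv (deriv (uhat k σ₀ R Rh f)) x -
            alphaPML σ₀ R x * k ^ 2 * uhat k σ₀ R Rh f x = f x := by
  refine ⟨uhat_neg_Rh hk.ne' hσ₀.ne' hR.le hRRh, uhat_Rh hk.ne' hσ₀.ne' hR.le hRRh,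
    fun x hx hxR => ?_⟩
  have hu'' := hasDerivAt_deriv_uhat (k := k) (σ₀ := σ₀) hR.le hf hx hxR
  refine ⟨(hasDerivAt_uhat_and_uhatFlux hR.le hf hx hxR).1.differentiableAt,
    hu''.differentiableAt, ?_⟩
  have hα := alphaPML_ne_zero (σ₀ := σ₀) (R := R) x
  have hk' : (k : ℂ) ≠ 0 := ofReal_ne_zero.mpr hk.ne'
  rw [hu''.deriv]
  field_simp
  linear_combination (-alphaPML σ₀ R x * k ^ 2 * uhat k σ₀ R Rh f x) * I_sq

end
end

section
/- Lemma 2.3(i), real case: for every real x ≥ 7/10, one has √(1+x²) + ln( x / (1 + √(1+x²)) ) > x − 1/(2x). -/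
/-!
With `s = √(1+x²)` and `y = (1+s)/x ≥ 1`, the logarithm in question is `-log y`. Bounding `log y`
above by its `[2/1]` Padé approximant `(y-1)(y+5)/(2(2y+1))` at `y = 1` leaves, after clearing
denominators and using `s² = 1 + x²`, the gap `(s-x)²/(2(x+2+2s)) > 0`. So the bound holds for
every `x > 0`.
-/

namespace Real

theorem log_le_pade {y : ℝ} (hy : 1 ≤ y) :
    log y ≤ (y - 1) * (y + 5) / (2 * (2 * y + 1)) := by
  set B := (y - 1) * (y + 5) / (2 * (2 * y + 1)) with hB
  have hy1 : 0 ≤ y - 1 := by linarith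
  have hB0 : 0 ≤ B := by positivity
  have htaylor : 1 + B + B ^ 2 / 2 + B ^ 3 / 6 + B ^ 4 / 24 ≤ exp B := by
    simpa [Finset.sum_range_succ, Nat.factorial, add_assoc] using sum_le_exp_of_nonneg hB0 5
  have htaylor_sub : 1 + B + B ^ 2 / 2 + B ^ 3 / 6 + B ^ 4 / 24 - y =
      (y - 1) ^ 4 * (36 + 54 * (y - 1) + 30 * (y - 1) ^ 2 + 5 / 3 * (y - 1) ^ 3
        + 1 / 24 * (y - 1) ^ 4) / (2 * (2 * y + 1)) ^ 4 := by
    rw [hB]; field_simp; ring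
  have hy_le : y ≤ 1 + B + B ^ 2 / 2 + B ^ 3 / 6 + B ^ 4 / 24 := by
    rw [← sub_nonneg, htaylor_sub]; positivity
  rw [log_le_iff_le_exp (by linarith)]
  exact hy_le.trans htaylor

end Real

theorem sub_add_one_div_sub_pade_eq {x s : ℝ} (hx : 0 < x) (hs0 : 0 ≤ s) (hs : s ^ 2 = 1 + x ^ 2) :
    s - x + 1 / (2 * x) - ((1 + s) / x - 1) * ((1 + s) / x + 5) / (2 * (2 * ((1 + s) / x) + 1)) =
      (s - x) ^ 2 / (2 * (x + 2 + 2 * s)) := by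
  field_simp
  linear_combination (3 * x - 1) * (x + 2 + 2 * s) * hs

theorem xi_real_lower_bound_of_pos {x : ℝ} (hx : 0 < x) :
    x - 1 / (2 * x) < √(1 + x ^ 2) + Real.log (x / (1 + √(1 + x ^ 2))) := by
  set s := √(1 + x ^ 2)
  have hs : s ^ 2 = 1 + x ^ 2 := Real.sq_sqrt (by positivity)
  have hxs : x < s := Real.lt_sqrt_of_sq_lt (by linarith)
  have hy : 1 ≤ (1 + s) / x := by rw [le_div_iff₀ hx]; linarith
  have hgap : 0 < (s - x) ^ 2 / (2 * (x + 2 + 2 * s)) := by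
    have : 0 < s - x := by linarith
    positivity
  rw [← sub_add_one_div_sub_pade_eq hx (by linarith) hs] at hgap
  rw [← inv_div (1 + s) x, Real.log_inv]
  linarith [Real.log_le_pade hy]

/-- Lemma 2.3(i), real case: for every real `x ≥ 7/10`,
`√(1+x²) + ln(x/(1+√(1+x²))) > x − 1/(2x)`. -/
theorem xi_real_lower_bound (x : ℝ) (hx : 7 / 10 ≤ x) :
    x - 1 / (2 * x) < Real.sqrt (1 + x ^ 2) + Real.log (x / (1 + Real.sqrt (1 + x ^ 2))) :=
  xi_real_lower_bound_of_pos (by linarith)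
end

section
/- Weighted Poincaré inequality on an annular interval (from the proof of the coercivity estimate (4.9) of Lemma 4.2): let 0 < R < Ř with 3 ln(Ř/R) ≤ 1/2, and let v : [R, Ř] → ℂ be absolutely continuous with v(R) = 0 and derivative v′ satisfying ∫_R^{Ř} r |v′(r)|² dr < ∞. Then ∫_R^{Ř} r |v(r)|² dr ≤ (Ř² − R²) ∫_R^{Ř} r |v′(r)|² dr. -/
open MeasureTheory Set

/-!
Since `v(r) = ∫_R^r v'`, the Cauchy–Schwarz inequality with weight `t` gives
`|v(r)|² ≤ (∫_R^r dt/t) (∫_R^r t|v'|²) ≤ ln(Ř/R) ∫_R^Ř t|v'|²` for every `r ∈ [R, Ř]`.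
Integrating against `r dr` yields the inequality with the constant `ln(Ř/R) (Ř² − R²) / 2`,
which is at most `Ř² − R²` because `ln(Ř/R) ≤ 1/6`.
-/

theorem sq_integral_le_integral_inv_mul_integral_mul_sq {α : Type*} [MeasurableSpace α]
    {μ : Measure α} {w h : α → ℝ} (hw : ∀ᵐ x ∂μ, 0 < w x) (hh : AEStronglyMeasurable h μ)
    (hwinv : Integrable (fun x => (w x)⁻¹) μ) (hwh : Integrable (fun x => w x * h x ^ 2) μ) :
    (∫ x, h x ∂μ) ^ 2 ≤ (∫ x, (w x)⁻¹ ∂μ) * ∫ x, w x * h x ^ 2 ∂μ := by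
  have hh_int : Integrable h μ := by
    refine ((hwinv.add hwh).div_const 2).mono' hh ?_
    filter_upwards [hw] with x hx
    rw [Real.norm_eq_abs, le_div_iff₀ two_pos, ← sub_nonneg]
    have : (w x)⁻¹ + w x * h x ^ 2 - |h x| * 2 = (w x)⁻¹ * (w x * |h x| - 1) ^ 2 := by
      field_simp; linear_combination (-w x ^ 2) * sq_abs (h x)
    rw [Pi.add_apply, this]; positivity
  have hquad : ∀ s : ℝ, 0 ≤ (∫ x, w x * h x ^ 2 ∂μ) * (s * s) + 2 * (∫ x, h x ∂μ) * s
      + ∫ x, (w x)⁻¹ ∂μ := by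
    intro s
    calc (0 : ℝ) ≤ ∫ x, (w x)⁻¹ * (s * w x * h x + 1) ^ 2 ∂μ :=
          integral_nonneg_of_ae (by filter_upwards [hw] with x hx; positivity)
      _ = ∫ x, (w x * h x ^ 2 * (s * s) + 2 * h x * s + (w x)⁻¹) ∂μ :=
          integral_congr_ae (by filter_upwards [hw] with x hx; field_simp; ring)
      _ = _ := by
          rw [integral_add (f := fun x => w x * h x ^ 2 * (s * s) + 2 * h x * s)
              ((hwh.mul_const _).add ((hh_int.const_mul 2).mul_const s)) hwinv,
            integral_add (hwh.mul_const _) ((hh_int.const_mul 2).mul_const s),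
            integral_mul_const, integral_mul_const, integral_const_mul]
  have := discrim_le_zero hquad
  rw [discrim] at this
  nlinarith

theorem sq_norm_intervalIntegral_le_log_mul_integral {E : Type*} [NormedAddCommGroup E]
    [NormedSpace ℝ E] {v' : ℝ → E} {a b : ℝ} (ha : 0 < a)
    (hmeas : AEStronglyMeasurable v' (volume.restrict (Icc a b)))
    (hint : IntegrableOn (fun t => t * ‖v' t‖ ^ 2) (Icc a b)) {r : ℝ} (hr : r ∈ Icc a b) :
    ‖∫ t in a..r, v' t‖ ^ 2 ≤ Real.log (b / a) * ∫ t in a..b, t * ‖v' t‖ ^ 2 := by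
  obtain ⟨har, hrb⟩ := hr
  have hsub : Ioc a r ⊆ Icc a b := Ioc_subset_Icc_self.trans (Icc_subset_Icc_right hrb)
  have hpos : ∀ᵐ t ∂volume.restrict (Ioc a r), 0 < t :=
    ae_restrict_of_forall_mem measurableSet_Ioc fun t ht => ha.trans ht.1
  have hinv : IntegrableOn (fun t : ℝ => t⁻¹) (Ioc a r) :=
    (continuousOn_inv₀.mono fun t ht => (ha.trans_le ht.1).ne').integrableOn_Icc.mono_set
      Ioc_subset_Icc_self
  have hcs := sq_integral_le_integral_inv_mul_integral_mul_sq hpos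
    (hmeas.mono_measure (Measure.restrict_mono hsub le_rfl)).norm hinv (hint.mono_set hsub)
  rw [← intervalIntegral.integral_of_le har, ← intervalIntegral.integral_of_le har,
    ← intervalIntegral.integral_of_le har, integral_inv_of_pos ha (ha.trans_le har)] at hcs
  have hnonneg : ∀ t ∈ Icc a b, 0 ≤ t * ‖v' t‖ ^ 2 := fun t ht =>
    mul_nonneg (ha.le.trans ht.1) (sq_nonneg _)
  calc ‖∫ t in a..r, v' t‖ ^ 2 ≤ (∫ t in a..r, ‖v' t‖) ^ 2 :=
        pow_le_pow_left₀ (norm_nonneg _) (intervalIntegral.norm_integral_le_integral_norm har) 2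
    _ ≤ Real.log (r / a) * ∫ t in a..r, t * ‖v' t‖ ^ 2 := hcs
    _ ≤ Real.log (b / a) * ∫ t in a..b, t * ‖v' t‖ ^ 2 := by
        refine mul_le_mul ?_ ?_ ?_ ?_
        · exact Real.log_le_log (div_pos (ha.trans_le har) ha)
            (div_le_div_of_nonneg_right hrb ha.le)
        · refine intervalIntegral.integral_mono_interval le_rfl har hrb ?_
            ((intervalIntegrable_iff_integrableOn_Icc_of_le (har.trans hrb)).mpr hint)
          exact ae_restrict_of_forall_mem measurableSet_Ioc fun t ht =>
            hnonneg t (Ioc_subset_Icc_self ht)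
        · exact intervalIntegral.integral_nonneg har fun t ht => hnonneg t ⟨ht.1, ht.2.trans hrb⟩
        · exact Real.log_nonneg ((one_le_div ha).mpr (har.trans hrb))

/-- Weighted Poincaré inequality on an annular interval (from the proof of the coercivity
estimate (4.9) of Lemma 4.2): if `0 < R < Ř` with `3 ln(Ř/R) ≤ 1/2` and `v : [R, Ř] → ℂ`
is absolutely continuous with `v(R) = 0` and `∫_R^{Ř} r|v′|² < ∞`, then
`∫_R^{Ř} r|v|² ≤ (Ř² − R²) ∫_R^{Ř} r|v′|²`. -/
theorem weighted_poincare_annulus (R Rc : ℝ) (v v' : ℝ → ℂ)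
    (hR : 0 < R) (hRRc : R < Rc) (hlog : 3 * Real.log (Rc / R) ≤ 1 / 2)
    (hAC : ∀ a b : ℝ, R ≤ a → a ≤ b → b ≤ Rc → v b - v a = ∫ t in a..b, v' t)
    (hv0 : v R = 0)
    (hmeas : AEStronglyMeasurable v' (volume.restrict (Set.Icc R Rc)))
    (hint : IntegrableOn (fun r => r * ‖v' r‖ ^ 2) (Set.Icc R Rc)) :
    (∫ r in R..Rc, r * ‖v r‖ ^ 2) ≤ (Rc ^ 2 - R ^ 2) * ∫ r in R..Rc, r * ‖v' r‖ ^ 2 := by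
  set I := ∫ r in R..Rc, r * ‖v' r‖ ^ 2
  have hsup : ∀ r ∈ Icc R Rc, ‖v r‖ ^ 2 ≤ Real.log (Rc / R) * I := fun r hr => by
    have hvr := hAC R r le_rfl hr.1 hr.2
    rw [hv0, sub_zero] at hvr
    exact hvr ▸ sq_norm_intervalIntegral_le_log_mul_integral hR hmeas hint hr
  have hI : 0 ≤ I := intervalIntegral.integral_nonneg hRRc.le fun t ht =>
    mul_nonneg (hR.le.trans ht.1) (sq_nonneg _)
  calc (∫ r in R..Rc, r * ‖v r‖ ^ 2) ≤ ∫ r in R..Rc, r * (Real.log (Rc / R) * I) := by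
        rw [intervalIntegral.integral_of_le hRRc.le, intervalIntegral.integral_of_le hRRc.le]
        refine integral_mono_of_nonneg ?_ (continuous_id.mul continuous_const).integrableOn_Ioc ?_
        · exact ae_restrict_of_forall_mem measurableSet_Ioc fun r hr =>
            mul_nonneg (hR.le.trans hr.1.le) (sq_nonneg _)
        · exact ae_restrict_of_forall_mem measurableSet_Ioc fun r hr =>
            mul_le_mul_of_nonneg_left (hsup r (Ioc_subset_Icc_self hr)) (hR.le.trans hr.1.le)
    _ = Real.log (Rc / R) / 2 * ((Rc ^ 2 - R ^ 2) * I) := by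
        rw [intervalIntegral.integral_mul_const, integral_id]; ring
    _ ≤ (Rc ^ 2 - R ^ 2) * I :=
        mul_le_of_le_one_left (mul_nonneg (by nlinarith) hI) (by linarith)
end
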